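/- arXiv:1204.5760 — 5 statements merged into one kernel-verified Lean document; each statement's English description precedes it below -/
import Mathlib

section
/- Assume there exist a measurable set X̃ ⊆ X with μ(X̃) > 0 and a measurable function A : X̃ → (0,∞) such that for every τ ∈ X̃: (i) g(u,τ) = 0 if and only if u = 0, and (ii) K(s,τ) > 0 for all s ∈ (−A(τ), A(τ)). Then every bounded solution φ of the convolution equation (17) with φ(t₀) = 0 for some t₀ ∈ ℝ satisfies φ(t) = 0 for all t ∈ ℝ. -/
open MeasureTheory Filter Topology Set

/-!
If `φ` vanished at `t₀` without vanishing identically, its zero set, closed and proper in the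
connected line, would have a boundary point `c`. Write the right-hand side of (17) as an iterated
lower Lebesgue integral `I t`: by Fatou it is lower semicontinuous in `t`, and it equals `φ t`
wherever `φ t > 0` (there the Bochner integral is nonzero, hence an honest integral). So
`I c ≤ φ c = 0`; the lower integral is used because at `c` the Bochner integral may be a junk
value. Hence for some `τ ∈ X̃` the integrand `K(s,τ) g(φ(c-s),τ)` vanishes for a.e. `s`, and
positivity of `K(·,τ)` on `(-A τ, A τ)`, `g(u,τ) = 0 ↔ u = 0` and continuity force `φ = 0` on
`(c - A τ, c + A τ)`, contradicting that `c` is a boundary point.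
-/
open scoped ENNReal

theorem lowerSemicontinuous_lintegral {T α : Type*} [TopologicalSpace T]
    [FirstCountableTopology T] [MeasurableSpace α] {μ : Measure α} {F : T → α → ℝ≥0∞}
    (hF : ∀ t, Measurable (F t)) (hlsc : ∀ a, LowerSemicontinuous fun t => F t a) :
    LowerSemicontinuous fun t => ∫⁻ a, F t a ∂μ := by
  refine lowerSemicontinuous_iff_le_liminf.2 fun t => ?_
  calc ∫⁻ a, F t a ∂μ ≤ ∫⁻ a, liminf (fun t' => F t' a) (𝓝 t) ∂μ :=
        lintegral_mono fun a => (hlsc a).le_liminf t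
    _ ≤ liminf (fun t' => ∫⁻ a, F t' a ∂μ) (𝓝 t) := lintegral_liminf_le hF

theorem LowerSemicontinuousAt.le_of_le_on_of_mem_closure {T γ : Type*} [TopologicalSpace T]
    [CompleteLinearOrder γ] [TopologicalSpace γ] [OrderTopology γ] {f g : T → γ} {s : Set T}
    {x : T} (hf : LowerSemicontinuousAt f x) (hg : ContinuousAt g x)
    (hfg : ∀ y ∈ s, f y ≤ g y) (hx : x ∈ closure s) : f x ≤ g x := by
  have := mem_closure_iff_nhdsWithin_neBot.1 hx
  calc f x ≤ liminf f (𝓝 x) := hf.le_liminf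
    _ ≤ liminf f (𝓝[s] x) := liminf_le_liminf_of_le nhdsWithin_le_nhds
    _ ≤ liminf g (𝓝[s] x) := liminf_le_liminf (eventually_nhdsWithin_of_forall hfg)
    _ = g x := (hg.tendsto.mono_left nhdsWithin_le_nhds).liminf_eq

section ConvolutionEquation

variable {X : Type*} [MeasurableSpace X] {K g : ℝ → X → ℝ} {φ : ℝ → ℝ}

noncomputable def convLIntegral (K g : ℝ → X → ℝ) (φ : ℝ → ℝ) (t : ℝ) (τ : X) : ℝ≥0∞ :=
  ∫⁻ s, ENNReal.ofReal (K s τ * g (φ (t - s)) τ)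

theorem measurable_convIntegrand (hK : Measurable fun p : ℝ × X => K p.1 p.2)
    (hg : Measurable fun p : ℝ × X => g p.1 p.2) (hφ : Measurable φ) (t : ℝ) :
    Measurable fun p : ℝ × X => K p.1 p.2 * g (φ (t - p.1)) p.2 :=
  hK.mul (hg.comp ((hφ.comp (measurable_const.sub measurable_fst)).prodMk measurable_snd))

theorem measurable_convLIntegral (hK : Measurable fun p : ℝ × X => K p.1 p.2)
    (hg : Measurable fun p : ℝ × X => g p.1 p.2) (hφ : Measurable φ) (t : ℝ) :
    Measurable (convLIntegral K g φ t) :=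
  (measurable_convIntegrand hK hg hφ t).ennreal_ofReal.lintegral_prod_left'

theorem lowerSemicontinuous_convLIntegral {τ : X} (hK : Measurable fun p : ℝ × X => K p.1 p.2)
    (hg : Measurable fun p : ℝ × X => g p.1 p.2) (hgcont : ContinuousOn (g · τ) (Ici 0))
    (hφ : Continuous φ) (hφnn : ∀ t, 0 ≤ φ t) :
    LowerSemicontinuous fun t => convLIntegral K g φ t τ := by
  refine lowerSemicontinuous_lintegral (fun t => ?_) fun s => Continuous.lowerSemicontinuous ?_
  · exact ((measurable_convIntegrand hK hg hφ.measurable t).comp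
      (measurable_id.prodMk measurable_const)).ennreal_ofReal
  · have hgφ : Continuous fun t => g (φ (t - s)) τ :=
      hgcont.comp_continuous (hφ.comp (continuous_id.sub continuous_const)) fun t => hφnn _
    exact ENNReal.continuous_ofReal.comp (continuous_const.mul hgφ)

theorem integrable_convIntegrand {τ : X} (hKτ : Integrable (K · τ))
    (hg : Measurable fun p : ℝ × X => g p.1 p.2) (hgcont : ContinuousOn (g · τ) (Ici 0))
    (hφ : Measurable φ) (hφnn : ∀ t, 0 ≤ φ t) {M : ℝ} (hM : ∀ t, φ t ≤ M) (t : ℝ) :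
    Integrable fun s => K s τ * g (φ (t - s)) τ := by
  obtain ⟨C, hC⟩ := isCompact_Icc.exists_bound_of_continuousOn
    (hgcont.mono (Icc_subset_Ici_self : Icc 0 M ⊆ Ici 0))
  have hgφ : Measurable fun s => g (φ (t - s)) τ :=
    hg.comp ((hφ.comp (measurable_const.sub measurable_id)).prodMk measurable_const)
  exact hKτ.mul_bdd hgφ.aestronglyMeasurable (ae_of_all _ fun s => hC _ ⟨hφnn _, hM _⟩)

theorem ofReal_eq_lintegral_convLIntegral {μ : Measure X} [SFinite μ]
    (hKint : Integrable (fun p : ℝ × X => K p.1 p.2) ((volume : Measure ℝ).prod μ))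
    (hKnn : ∀ s τ, 0 ≤ K s τ) (hg : Measurable fun p : ℝ × X => g p.1 p.2)
    (hgnn : ∀ u τ, 0 ≤ u → 0 ≤ g u τ) (hgcont : ∀ τ, ContinuousOn (g · τ) (Ici 0))
    (hφ : Measurable φ) (hφnn : ∀ t, 0 ≤ φ t) {M : ℝ} (hM : ∀ t, φ t ≤ M) {t : ℝ}
    (hφeq : φ t = ∫ τ, (∫ s, K s τ * g (φ (t - s)) τ) ∂μ) (ht : φ t ≠ 0) :
    ENNReal.ofReal (φ t) = ∫⁻ τ, convLIntegral K g φ t τ ∂μ := by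
  have hnn : ∀ s τ, 0 ≤ K s τ * g (φ (t - s)) τ :=
    fun s τ => mul_nonneg (hKnn s τ) (hgnn _ τ (hφnn _))
  have hint : Integrable (fun τ => ∫ s, K s τ * g (φ (t - s)) τ) μ :=
    Integrable.of_integral_ne_zero (hφeq ▸ ht)
  rw [hφeq, ofReal_integral_eq_lintegral_ofReal hint
    (ae_of_all _ fun τ => integral_nonneg (hnn · τ))]
  refine lintegral_congr_ae ?_
  filter_upwards [hKint.prod_left_ae] with τ hKτ
  exact ofReal_integral_eq_lintegral_ofReal
    (integrable_convIntegrand hKτ hg (hgcont τ) hφ hφnn hM t) (ae_of_all _ (hnn · τ))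

theorem eqOn_zero_of_convLIntegral_eq_zero {τ : X} {a c : ℝ}
    (hK : Measurable fun p : ℝ × X => K p.1 p.2) (hg : Measurable fun p : ℝ × X => g p.1 p.2)
    (hgnn : ∀ u, 0 ≤ u → 0 ≤ g u τ) (hgz : ∀ u, 0 ≤ u → (g u τ = 0 ↔ u = 0))
    (hKpos : ∀ s ∈ Ioo (-a) a, 0 < K s τ) (hφ : Continuous φ) (hφnn : ∀ t, 0 ≤ φ t)
    (h0 : convLIntegral K g φ c τ = 0) :
    EqOn φ 0 (Ioo (c - a) (c + a)) := by
  have hmeas : Measurable fun s => ENNReal.ofReal (K s τ * g (φ (c - s)) τ) :=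
    ((measurable_convIntegrand hK hg hφ.measurable c).comp
      (measurable_id.prodMk measurable_const)).ennreal_ofReal
  have hae : ∀ᵐ s, s ∈ Ioo (-a) a → φ (c - s) = 0 := by
    filter_upwards [(lintegral_eq_zero_iff hmeas).1 h0] with s hs hsa
    have hprod : K s τ * g (φ (c - s)) τ ≤ 0 := ENNReal.ofReal_eq_zero.1 hs
    have hgφ : 0 ≤ g (φ (c - s)) τ := hgnn _ (hφnn _)
    have : g (φ (c - s)) τ ≤ 0 := by nlinarith [hKpos s hsa]
    exact (hgz _ (hφnn _)).1 (le_antisymm this hgφ)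
  have hzero : EqOn (fun s => φ (c - s)) 0 (Ioo (-a) a) :=
    Measure.eqOn_open_of_ae_eq ((ae_restrict_iff' measurableSet_Ioo).2 hae) isOpen_Ioo
      (by fun_prop) continuousOn_const
  intro x hx
  simpa using hzero (x := c - x) ⟨by linarith [hx.2], by linarith [hx.1]⟩

end ConvolutionEquation

theorem stmt1_general
    {X : Type*} [MeasurableSpace X] (μ : Measure X) [IsFiniteMeasure μ]
    (K : ℝ → X → ℝ) (g : ℝ → X → ℝ)
    (hKmeas : Measurable fun p : ℝ × X => K p.1 p.2)
    (hKnn : ∀ s τ, 0 ≤ K s τ)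
    (hKint : Integrable (fun p : ℝ × X => K p.1 p.2) ((volume : Measure ℝ).prod μ))
    (hgmeas : Measurable fun p : ℝ × X => g p.1 p.2)
    (hgnn : ∀ u τ, 0 ≤ u → 0 ≤ g u τ)
    (hgcont : ∀ τ, ContinuousOn (fun u => g u τ) (Ici 0))
    (Xt : Set X) (hXtpos : 0 < μ Xt)
    (A : X → ℝ) (hApos : ∀ τ ∈ Xt, 0 < A τ)
    (hgz : ∀ τ ∈ Xt, ∀ u, 0 ≤ u → (g u τ = 0 ↔ u = 0))
    (hKposA : ∀ τ ∈ Xt, ∀ s ∈ Ioo (-(A τ)) (A τ), 0 < K s τ)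
    (φ : ℝ → ℝ) (hφc : Continuous φ)
    (hφnn : ∀ t, 0 ≤ φ t)
    (hφbd : ∃ M, ∀ t, φ t ≤ M)
    (hφeq : ∀ t, φ t = ∫ τ, (∫ s, K s τ * g (φ (t - s)) τ) ∂μ)
    (t0 : ℝ) (hφt0 : φ t0 = 0) :
    ∀ t, φ t = 0 := by
  obtain ⟨M, hM⟩ := hφbd
  set Z := {x | φ x = 0}
  by_contra! hne
  obtain ⟨c, hc⟩ : (frontier Z).Nonempty := nonempty_frontier_iff.2
    ⟨⟨t0, hφt0⟩, (ne_univ_iff_exists_notMem Z).2 hne⟩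
  have hI : ∫⁻ τ, convLIntegral K g φ c τ ∂μ = 0 := by
    have hle := LowerSemicontinuousAt.le_of_le_on_of_mem_closure
      (lowerSemicontinuous_lintegral (μ := μ)
        (measurable_convLIntegral hKmeas hgmeas hφc.measurable)
        (fun τ => lowerSemicontinuous_convLIntegral hKmeas hgmeas (hgcont τ) hφc hφnn) c)
      (ENNReal.continuous_ofReal.comp hφc).continuousAt
      (fun t ht => (ofReal_eq_lintegral_convLIntegral hKint hKnn hgmeas hgnn hgcont
        hφc.measurable hφnn hM (hφeq t) ht).ge)
      (frontier_subset_closure ((frontier_compl Z).symm ▸ hc))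
    have hc0 : φ c = 0 := (isClosed_eq hφc continuous_const).frontier_subset hc
    rwa [Function.comp_apply, hc0, ENNReal.ofReal_zero, nonpos_iff_eq_zero] at hle
  obtain ⟨τ, hτ, hτ0⟩ : ∃ τ ∈ Xt, convLIntegral K g φ c τ = 0 :=
    Measure.exists_mem_of_measure_ne_zero_of_ae hXtpos.ne' (ae_restrict_of_ae
      ((lintegral_eq_zero_iff (measurable_convLIntegral hKmeas hgmeas hφc.measurable c)).1 hI))
  have hφzero := eqOn_zero_of_convLIntegral_eq_zero hKmeas hgmeas (fun u => hgnn u τ)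
    (hgz τ hτ) (hKposA τ hτ) hφc hφnn hτ0
  exact hc.2 (mem_interior_iff_mem_nhds.2 (mem_of_superset
    (Ioo_mem_nhds (by linarith [hApos τ hτ]) (by linarith [hApos τ hτ])) hφzero))

theorem stmt1
    {X : Type*} [MeasurableSpace X] (μ : Measure X) [IsFiniteMeasure μ]
    (K : ℝ → X → ℝ) (g : ℝ → X → ℝ)
    (hKmeas : Measurable fun p : ℝ × X => K p.1 p.2)
    (hKnn : ∀ s τ, 0 ≤ K s τ)
    (hKint : Integrable (fun p : ℝ × X => K p.1 p.2) ((volume : Measure ℝ).prod μ))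
    (hKpos : ∀ τ, 0 < ∫ s, K s τ)
    (hgmeas : Measurable fun p : ℝ × X => g p.1 p.2)
    (hg0 : ∀ τ, g 0 τ = 0)
    (hgnn : ∀ u τ, 0 ≤ u → 0 ≤ g u τ)
    (hgcont : ∀ τ, ContinuousOn (fun u => g u τ) (Ici 0))
    (g' : X → ℝ) (hg'meas : Measurable g') (hg'pos : ∀ τ, 0 < g' τ)
    (hg'lim : ∀ τ, Tendsto (fun u => g u τ / u) (𝓝[>] 0) (𝓝 (g' τ)))
    (Xt : Set X) (hXtm : MeasurableSet Xt) (hXtpos : 0 < μ Xt)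
    (A : X → ℝ) (hAmeas : Measurable A) (hApos : ∀ τ ∈ Xt, 0 < A τ)
    (hgz : ∀ τ ∈ Xt, ∀ u, 0 ≤ u → (g u τ = 0 ↔ u = 0))
    (hKposA : ∀ τ ∈ Xt, ∀ s ∈ Ioo (-(A τ)) (A τ), 0 < K s τ)
    (φ : ℝ → ℝ) (hφc : Continuous φ)
    (hφnn : ∀ t, 0 ≤ φ t)
    (hφbd : ∃ M, ∀ t, φ t ≤ M)
    (hφeq : ∀ t, φ t = ∫ τ, (∫ s, K s τ * g (φ (t - s)) τ) ∂μ)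
    (t0 : ℝ) (hφt0 : φ t0 = 0) :
    ∀ t, φ t = 0 :=
  stmt1_general μ K g hKmeas hKnn hKint hgmeas hgnn hgcont Xt hXtpos A hApos hgz hKposA φ hφc hφnn
    hφbd hφeq t0 hφt0
end

section
/- Assume χ(0) < 0 and conditions (C) and (N) hold. Then there exists ζ1 ∈ (0, ζ2) such that: (1) G is continuous from [0,∞) to [0,∞), G(s) > 0 for s > 0, and the limit lim_{s→0+} G(s)/s exists in (1, +∞]; (2) G([ζ1, ζ2]) ⊆ [ζ1, ζ2] and G([0,∞)) ⊆ [0, ζ2]; (3) min_{s ∈ [ζ1,ζ2]} G(s) = G(ζ1), while G(s) > s for all s ∈ (0, ζ1]. -/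
/-!
Put `k τ = ∫ K(s,τ) ds` and `Θ v = v - ∫_{X∖{τ0}} g(v,τ) k(τ) dμ`, so that
`G = Θ⁻¹ ∘ (C g(·,τ0))`. Strict monotonicity of `Θ` alone makes `G` continuous. By dominated
convergence (condition (C)) `Θ w / w → 1 - A` with `A = ∫_{X∖{τ0}} g'(0,τ) k(τ) dμ`, while
`C g(s,τ0) / s → C g'(0,τ0)`; since `μ {τ0} = 1`, the hypothesis `χ(0) < 0` gives
`1 - A < C g'(0,τ0)`. Hence `G s / s = (Θ (G s) / s) / (Θ (G s) / G s)` tends to a limit `> 1`,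
or to `+∞` when `A = 1`, and `G s > s` on some `(0, u]`. For `ζ1` take the last point of `[0, u]`
where `G` lies below a level strictly between `G 0 = 0` and `min_{[u, ζ2]} G`: then `G ζ1` is the
minimum of `G` on `[ζ1, ζ2]`, and `G ζ1 > ζ1` makes `[ζ1, ζ2]` invariant.
-/

open MeasureTheory Filter Topology Set

theorem StrictMonoOn.tendsto_of_tendsto_comp {α β γ : Type*}
    [LinearOrder β] [TopologicalSpace β] [OrderTopology β]
    [LinearOrder γ] [TopologicalSpace γ] [OrderTopology γ]
    {f : β → γ} {a b y : β} {G : α → β} {l : Filter α} (hf : StrictMonoOn f (Icc a b))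
    (hG : ∀ᶠ x in l, G x ∈ Icc a b) (hy : y ∈ Icc a b)
    (h : Tendsto (fun x => f (G x)) l (𝓝 (f y))) : Tendsto G l (𝓝 y) := by
  refine tendsto_order.2 ⟨fun c hc => ?_, fun c hc => ?_⟩
  · rcases lt_or_ge c a with hca | hac
    · filter_upwards [hG] with x hx using hca.trans_le hx.1
    · have hcI : c ∈ Icc a b := ⟨hac, hc.le.trans hy.2⟩
      filter_upwards [hG, h.eventually (lt_mem_nhds (hf hcI hy hc))] with x hx hfx
      exact (hf.lt_iff_lt hcI hx).1 hfx
  · rcases le_or_gt c b with hcb | hbc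
    · have hcI : c ∈ Icc a b := ⟨hy.1.trans hc.le, hcb⟩
      filter_upwards [hG, h.eventually (gt_mem_nhds (hf hy hcI hc))] with x hx hfx
      exact (hf.lt_iff_lt hx hcI).1 hfx
    · filter_upwards [hG] with x hx using hx.2.trans_lt hbc

theorem StrictMonoOn.continuousOn_of_comp_eq {α β γ : Type*} [TopologicalSpace α]
    [LinearOrder β] [TopologicalSpace β] [OrderTopology β]
    [LinearOrder γ] [TopologicalSpace γ] [OrderTopology γ]
    {Θ : β → γ} {a b : β} {G : α → β} {φ : α → γ} {s : Set α}
    (hΘ : StrictMonoOn Θ (Icc a b)) (hG : ∀ v ∈ s, G v ∈ Icc a b ∧ Θ (G v) = φ v)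
    (hφ : ContinuousOn φ s) : ContinuousOn G s := fun v hv =>
  hΘ.tendsto_of_tendsto_comp (eventually_nhdsWithin_of_forall fun w hw => (hG w hw).1)
    (hG v hv).1 ((hG v hv).2 ▸ (hφ v hv).congr'
      (eventually_nhdsWithin_of_forall fun w hw => (hG w hw).2.symm))

theorem tendsto_div_one_lt_or_atTop {α : Type*} {l : Filter α} [l.NeBot] {p q : α → ℝ}
    {P Q : ℝ} (hp : Tendsto p l (𝓝 P)) (hq : Tendsto q l (𝓝 Q)) (hq0 : ∀ᶠ x in l, 0 < q x)
    (hQP : Q < P) :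
    (∃ L, 1 < L ∧ Tendsto (fun x => p x / q x) l (𝓝 L)) ∨
      Tendsto (fun x => p x / q x) l atTop := by
  rcases (ge_of_tendsto hq (hq0.mono fun _ => le_of_lt)).eq_or_lt with rfl | hQ
  · have hq' : Tendsto q l (𝓝[>] 0) := tendsto_nhdsWithin_iff.2 ⟨hq, hq0⟩
    simpa only [div_eq_mul_inv, Function.comp_def] using
      Or.inr (hp.pos_mul_atTop hQP (tendsto_inv_nhdsGT_zero.comp hq'))
  · exact Or.inl ⟨P / Q, (one_lt_div hQ).2 hQP, hp.div hq hQ.ne'⟩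

theorem tendsto_div_one_lt_or_atTop_of_comp_eq {Θ φ G : ℝ → ℝ} {A P : ℝ}
    (hGlim : Tendsto G (𝓝[>] 0) (𝓝[>] 0)) (hΘpos : ∀ᶠ w in 𝓝[>] (0:ℝ), 0 < Θ w)
    (hG : ∀ᶠ s in 𝓝[>] (0:ℝ), Θ (G s) = φ s)
    (hΘlim : Tendsto (fun w => Θ w / w) (𝓝[>] 0) (𝓝 A))
    (hφlim : Tendsto (fun s => φ s / s) (𝓝[>] 0) (𝓝 P)) (hAP : A < P) :
    (∃ L, 1 < L ∧ Tendsto (fun s => G s / s) (𝓝[>] 0) (𝓝 L)) ∨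
      Tendsto (fun s => G s / s) (𝓝[>] 0) atTop := by
  have hq0 : ∀ᶠ w in 𝓝[>] (0:ℝ), 0 < Θ w / w := by
    filter_upwards [hΘpos, self_mem_nhdsWithin] with w hΘw hw using div_pos hΘw hw
  have hratio : (fun s => φ s / s / (Θ (G s) / G s)) =ᶠ[𝓝[>] 0] fun s => G s / s := by
    filter_upwards [hG, hGlim.eventually hΘpos] with s hs hΘs
    rw [← hs, div_div_div_cancel_left' _ _ hΘs.ne']
  exact (tendsto_div_one_lt_or_atTop hφlim (hΘlim.comp hGlim) (hGlim.eventually hq0) hAP).imp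
    (fun ⟨L, hL, h⟩ => ⟨L, hL, h.congr' hratio⟩) (·.congr' hratio)

theorem exists_mem_Ioo_forall_Icc_le {G : ℝ → ℝ} {a b c : ℝ} (hac : a < c) (hcb : c ≤ b)
    (hG : ContinuousOn G (Icc a b)) (ha : ∀ s ∈ Icc c b, G a < G s) :
    ∃ ζ ∈ Ioo a c, ∀ s ∈ Icc ζ b, G ζ ≤ G s := by
  obtain ⟨p, hp, hpmin⟩ := isCompact_Icc.exists_isMinOn (nonempty_Icc.2 hcb)
    (hG.mono (Icc_subset_Icc_left hac.le))
  obtain ⟨m, hGa, hmp⟩ := exists_between (ha p hp)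
  have hmG : ∀ s ∈ Icc c b, m < G s := fun s hs => hmp.trans_le (isMinOn_iff.1 hpmin s hs)
  set B := Icc a c ∩ G ⁻¹' Iic m
  have hBbdd : BddAbove B := ⟨c, fun t ht => ht.1.2⟩
  have hζB : sSup B ∈ B := ((hG.mono (Icc_subset_Icc_right hcb)).preimage_isClosed_of_isClosed
    isClosed_Icc isClosed_Iic).csSup_mem ⟨a, left_mem_Icc.2 hac.le, hGa.le⟩ hBbdd
  have hlt : ∀ᶠ t in 𝓝[>] a, G t < m := by
    have h := (hG a (left_mem_Icc.2 (hac.trans_le hcb).le)).eventually (gt_mem_nhds hGa)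
    rw [nhdsWithin_Icc_eq_nhdsGE (hac.trans_le hcb)] at h
    exact h.filter_mono (nhdsWithin_mono _ Ioi_subset_Ici_self)
  obtain ⟨t, hGt, hat⟩ := (hlt.and (Ioo_mem_nhdsGT hac)).exists
  refine ⟨sSup B, ⟨hat.1.trans_le (le_csSup hBbdd ⟨Ioo_subset_Icc_self hat, hGt.le⟩),
    hζB.1.2.lt_of_ne fun h => (hmG c ⟨le_rfl, hcb⟩).not_ge (h ▸ hζB.2)⟩, fun s hs => ?_⟩
  by_contra! hsζ
  rcases lt_or_ge s c with hsc | hcs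
  · have hsB : s ∈ B := ⟨⟨hζB.1.1.trans hs.1, hsc.le⟩, (hsζ.trans_le hζB.2).le⟩
    exact hsζ.ne (congrArg G (le_antisymm (le_csSup hBbdd hsB) hs.1))
  · exact (hmG s ⟨hcs, hs.2⟩).not_ge (hsζ.le.trans hζB.2)

theorem exists_mapsTo_Icc_forall_Icc_le {G : ℝ → ℝ} {b : ℝ} (hb : 0 < b)
    (hG : ContinuousOn G (Icc 0 b)) (hG0 : ∀ s ∈ Ioc 0 b, G 0 < G s)
    (hGb : ∀ s ∈ Icc 0 b, G s ≤ b) (hGgt : ∀ᶠ s in 𝓝[>] (0:ℝ), s < G s) :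
    ∃ ζ ∈ Ioo 0 b, MapsTo G (Icc ζ b) (Icc ζ b) ∧ (∀ s ∈ Icc ζ b, G ζ ≤ G s) ∧
      ∀ s ∈ Ioc 0 ζ, s < G s := by
  obtain ⟨u, hu, hGu⟩ := mem_nhdsGT_iff_exists_Ioc_subset.1 hGgt
  obtain ⟨ζ, ⟨hζ0, hζc⟩, hmin⟩ := exists_mem_Ioo_forall_Icc_le (lt_min hu hb)
    (min_le_right u b) hG fun s hs => hG0 s ⟨(lt_min hu hb).trans_le hs.1, hs.2⟩
  have hgt : ∀ s ∈ Ioc 0 ζ, s < G s :=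
    fun s hs => hGu ⟨hs.1, hs.2.trans (hζc.le.trans (min_le_left u b))⟩
  refine ⟨ζ, ⟨hζ0, hζc.trans_le (min_le_right u b)⟩,
    fun s hs => ⟨?_, hGb s ⟨hζ0.le.trans hs.1, hs.2⟩⟩, hmin, hgt⟩
  exact ((hgt ζ ⟨hζ0, le_rfl⟩).trans_le (hmin s hs)).le

theorem exists_invariant_Icc_of_strictMonoOn_comp_eq {Θ φ G : ℝ → ℝ} {b A P : ℝ}
    (hb : 0 < b) (hΘ : StrictMonoOn Θ (Icc 0 b)) (hΘ0 : Θ 0 = 0)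
    (hΘlim : Tendsto (fun w => Θ w / w) (𝓝[>] 0) (𝓝 A))
    (hφ : ContinuousOn φ (Ici 0)) (hφ0 : φ 0 = 0) (hφpos : ∀ s, 0 < s → 0 < φ s)
    (hφlim : Tendsto (fun s => φ s / s) (𝓝[>] 0) (𝓝 P)) (hAP : A < P)
    (hG : ∀ v, 0 ≤ v → G v ∈ Icc 0 b ∧ Θ (G v) = φ v) :
    ∃ ζ1 ∈ Ioo 0 b,
      (ContinuousOn G (Ici 0) ∧ (∀ s, 0 < s → 0 < G s) ∧
        ((∃ L, 1 < L ∧ Tendsto (fun s => G s / s) (𝓝[>] 0) (𝓝 L)) ∨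
          Tendsto (fun s => G s / s) (𝓝[>] 0) atTop)) ∧
      (MapsTo G (Icc ζ1 b) (Icc ζ1 b) ∧ MapsTo G (Ici 0) (Icc 0 b)) ∧
      ((∀ s ∈ Icc ζ1 b, G ζ1 ≤ G s) ∧ ∀ s ∈ Ioc 0 ζ1, s < G s) := by
  have hG0 : G 0 = 0 :=
    hΘ.injOn (hG 0 le_rfl).1 ⟨le_rfl, hb.le⟩ (by rw [(hG 0 le_rfl).2, hφ0, hΘ0])
  have hGpos : ∀ s, 0 < s → 0 < G s := fun s hs =>
    (hG s hs.le).1.1.lt_of_ne fun h => (hφpos s hs).ne' (by rw [← (hG s hs.le).2, ← h, hΘ0])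
  have hGcont : ContinuousOn G (Ici 0) := hΘ.continuousOn_of_comp_eq hG hφ
  have hGlim : Tendsto G (𝓝[>] 0) (𝓝[>] 0) := tendsto_nhdsWithin_iff.2
    ⟨((hGcont 0 self_mem_Ici).mono Ioi_subset_Ici_self).tendsto.mono_right (by rw [hG0]),
      eventually_nhdsWithin_of_forall hGpos⟩
  have hΘpos : ∀ᶠ w in 𝓝[>] (0:ℝ), 0 < Θ w := by
    filter_upwards [Ioc_mem_nhdsGT hb] with w hw
    exact hΘ0 ▸ hΘ ⟨le_rfl, hb.le⟩ ⟨hw.1.le, hw.2⟩ hw.1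
  have hlim := tendsto_div_one_lt_or_atTop_of_comp_eq hGlim hΘpos
    (eventually_nhdsWithin_of_forall fun s hs => (hG s (le_of_lt hs)).2) hΘlim hφlim hAP
  have hGgt : ∀ᶠ s in 𝓝[>] (0:ℝ), s < G s := by
    filter_upwards [self_mem_nhdsWithin, hlim.elim (fun ⟨L, hL, h⟩ => h.eventually_const_lt hL)
      (·.eventually_gt_atTop 1)] with s hs h1
    exact (one_lt_div hs).1 h1
  obtain ⟨ζ1, hζ1, hmaps, hmin, hgt⟩ := exists_mapsTo_Icc_forall_Icc_le hb
    (hGcont.mono Icc_subset_Ici_self) (fun s hs => by rw [hG0]; exact hGpos s hs.1)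
    (fun s hs => (hG s hs.1).1.2) hGgt
  exact ⟨ζ1, hζ1, ⟨hGcont, hGpos, hlim⟩, ⟨hmaps, fun s hs => (hG s hs).1⟩, hmin, hgt⟩

theorem tendsto_integral_mul_div_nhdsGT_zero {X : Type*} [MeasurableSpace X] {ν : Measure X}
    {g : ℝ → X → ℝ} {g' k D : X → ℝ} {δ : ℝ} (hδ : 0 < δ)
    (hgm : ∀ w, AEStronglyMeasurable (g w) ν) (hkm : AEStronglyMeasurable k ν)
    (hg : ∀ w τ, 0 ≤ w → 0 ≤ g w τ) (hk : ∀ τ, 0 ≤ k τ)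
    (hD : ∀ τ, ∀ w ∈ Icc 0 δ, g w τ ≤ D τ * w)
    (hDint : Integrable (fun τ => D τ * k τ) ν)
    (hlim : ∀ τ, Tendsto (fun w => g w τ / w) (𝓝[>] 0) (𝓝 (g' τ))) :
    Tendsto (fun w => (∫ τ, g w τ * k τ ∂ν) / w) (𝓝[>] 0)
      (𝓝 (∫ τ, g' τ * k τ ∂ν)) := by
  simp_rw [← integral_div]
  refine tendsto_integral_filter_of_dominated_convergence _
    (Eventually.of_forall fun w => by have := hgm w; fun_prop) ?_ hDint
    (Eventually.of_forall fun τ => ?_)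
  · filter_upwards [Ioc_mem_nhdsGT hδ] with w hw
    refine Eventually.of_forall fun τ => ?_
    rw [Real.norm_of_nonneg (div_nonneg (mul_nonneg (hg w τ hw.1.le) (hk τ)) hw.1.le),
      div_le_iff₀ hw.1]
    calc g w τ * k τ ≤ D τ * w * k τ :=
          mul_le_mul_of_nonneg_right (hD τ w ⟨hw.1.le, hw.2⟩) (hk τ)
      _ = D τ * k τ * w := by ring
  · simpa only [div_mul_eq_mul_div] using (hlim τ).mul_const (k τ)

theorem integral_le_measureReal_singleton_mul_add_setIntegral_compl {X : Type*}
    [MeasurableSpace X] {μ : Measure X} {f : X → ℝ} (hf : Integrable f μ)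
    (hfm : StronglyMeasurable f) (hf0 : 0 ≤ f) (a : X) :
    ∫ x, f x ∂μ ≤ μ.real {a} * f a + ∫ x in {a}ᶜ, f x ∂μ := by
  -- `{a}` need not be measurable, so `μ` is only dominated by the sum of the two restrictions.
  have hle : μ ≤ μ.restrict {a} + μ.restrict {a}ᶜ := by
    simpa using Measure.restrict_union_le (μ := μ) {a} {a}ᶜ
  calc ∫ x, f x ∂μ ≤ ∫ x, f x ∂(μ.restrict {a} + μ.restrict {a}ᶜ) :=
        integral_mono_measure hle (Eventually.of_forall hf0) (hf.restrict.add_measure hf.restrict)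
    _ = μ.real {a} * f a + ∫ x in {a}ᶜ, f x ∂μ := by
        rw [integral_add_measure hf.restrict hf.restrict, integral_singleton' hfm, smul_eq_mul]

theorem stmt4_general
    {X : Type*} [MeasurableSpace X] (μ : Measure X) [IsFiniteMeasure μ]
    (K : ℝ → X → ℝ) (g : ℝ → X → ℝ)
    (hKmeas : Measurable fun p : ℝ × X => K p.1 p.2)
    (hKpos : ∀ τ, 0 < ∫ s, K s τ)
    (hgmeas : Measurable fun p : ℝ × X => g p.1 p.2)
    (hg0 : ∀ τ, g 0 τ = 0)
    (hgnn : ∀ u τ, 0 ≤ u → 0 ≤ g u τ)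
    (hgcont : ∀ τ, ContinuousOn (fun u => g u τ) (Ici 0))
    (g' : X → ℝ) (hg'meas : Measurable g') (hg'pos : ∀ τ, 0 < g' τ)
    (hg'lim : ∀ τ, Tendsto (fun u => g u τ / u) (𝓝[>] 0) (𝓝 (g' τ)))
    (hC : ∀ δ : ℝ, 0 < δ → ∃ Cd : X → ℝ, Measurable Cd ∧ (∀ τ, 0 ≤ Cd τ) ∧
      (∀ τ, ∀ u ∈ Icc (0:ℝ) δ, g u τ ≤ Cd τ * u) ∧
      Integrable (fun τ => Cd τ * ∫ s, K s τ) μ)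
    (τ0 : X) (hτ0 : μ {τ0} = 1)
    (hgτ0 : ∀ v, 0 < v → 0 < g v τ0)
    (ζ2 : ℝ) (hζ2 : 0 < ζ2)
    (hΘmono : StrictMonoOn (fun v => v - ∫ τ in {τ0}ᶜ, (g v τ * ∫ s, K s τ) ∂μ) (Icc 0 ζ2))
    (G : ℝ → ℝ)
    (hGdef : ∀ v, 0 ≤ v → G v ∈ Icc 0 ζ2 ∧
      G v - (∫ τ in {τ0}ᶜ, (g (G v) τ * ∫ s, K s τ) ∂μ) = (∫ s, K s τ0) * g v τ0)
    (hχ0int : Integrable (fun p : ℝ × X => K p.1 p.2 * g' p.2) ((volume : Measure ℝ).prod μ))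
    (hχ0 : 1 < ∫ τ, (∫ s, K s τ * g' τ) ∂μ)
    :
    ∃ ζ1 ∈ Ioo (0:ℝ) ζ2,
      (ContinuousOn G (Ici 0) ∧ (∀ s : ℝ, 0 < s → 0 < G s) ∧
        ((∃ L : ℝ, 1 < L ∧ Tendsto (fun s => G s / s) (𝓝[>] 0) (𝓝 L)) ∨
          Tendsto (fun s => G s / s) (𝓝[>] 0) atTop)) ∧
      (MapsTo G (Icc ζ1 ζ2) (Icc ζ1 ζ2) ∧ MapsTo G (Ici 0) (Icc 0 ζ2)) ∧
      ((∀ s ∈ Icc ζ1 ζ2, G ζ1 ≤ G s) ∧ (∀ s ∈ Ioc (0:ℝ) ζ1, s < G s)) := by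
  set Θ : ℝ → ℝ := fun v => v - ∫ τ in {τ0}ᶜ, (g v τ * ∫ s, K s τ) ∂μ
  have hkm : Measurable fun τ => ∫ s, K s τ :=
    hKmeas.stronglyMeasurable.integral_prod_left'.measurable
  obtain ⟨Cd, -, -, hCdbd, hCdint⟩ := hC 1 one_pos
  have hΘlim : Tendsto (fun w => Θ w / w) (𝓝[>] 0)
      (𝓝 (1 - ∫ τ in {τ0}ᶜ, (g' τ * ∫ s, K s τ) ∂μ)) := by
    refine (tendsto_const_nhds.sub (tendsto_integral_mul_div_nhdsGT_zero (g := g) one_pos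
      (fun w => (hgmeas.comp measurable_prodMk_left).aestronglyMeasurable)
      hkm.aestronglyMeasurable hgnn (fun τ => (hKpos τ).le) hCdbd hCdint.restrict
      hg'lim)).congr' ?_
    filter_upwards [self_mem_nhdsWithin] with w hw
    rw [sub_div, div_self (ne_of_gt hw)]
  have hχ : 1 - ∫ τ in {τ0}ᶜ, (g' τ * ∫ s, K s τ) ∂μ < (∫ s, K s τ0) * g' τ0 := by
    have hprod : (fun τ => ∫ s, K s τ * g' τ) = fun τ => g' τ * ∫ s, K s τ :=
      funext fun τ => by rw [integral_mul_const, mul_comm]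
    have hint := hχ0int.integral_prod_right
    rw [hprod] at hint hχ0
    have hsplit := integral_le_measureReal_singleton_mul_add_setIntegral_compl hint
      (hg'meas.mul hkm).stronglyMeasurable (fun τ => mul_nonneg (hg'pos τ).le (hKpos τ).le) τ0
    rw [measureReal_def, hτ0, ENNReal.toReal_one] at hsplit
    linarith
  exact exists_invariant_Icc_of_strictMonoOn_comp_eq (φ := fun v => (∫ s, K s τ0) * g v τ0)
    hζ2 hΘmono (by simp [Θ, hg0]) hΘlim
    (continuousOn_const.mul (hgcont τ0)) (by simp [hg0])
    (fun s hs => mul_pos (hKpos τ0) (hgτ0 s hs))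
    (by simpa only [mul_div_assoc] using (hg'lim τ0).const_mul (∫ s, K s τ0)) hχ hGdef

theorem stmt4
    {X : Type*} [MeasurableSpace X] (μ : Measure X) [IsFiniteMeasure μ]
    (K : ℝ → X → ℝ) (g : ℝ → X → ℝ)
    (hKmeas : Measurable fun p : ℝ × X => K p.1 p.2)
    (hKnn : ∀ s τ, 0 ≤ K s τ)
    (hKint : Integrable (fun p : ℝ × X => K p.1 p.2) ((volume : Measure ℝ).prod μ))
    (hKpos : ∀ τ, 0 < ∫ s, K s τ)
    (hgmeas : Measurable fun p : ℝ × X => g p.1 p.2)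
    (hg0 : ∀ τ, g 0 τ = 0)
    (hgnn : ∀ u τ, 0 ≤ u → 0 ≤ g u τ)
    (hgcont : ∀ τ, ContinuousOn (fun u => g u τ) (Ici 0))
    (g' : X → ℝ) (hg'meas : Measurable g') (hg'pos : ∀ τ, 0 < g' τ)
    (hg'lim : ∀ τ, Tendsto (fun u => g u τ / u) (𝓝[>] 0) (𝓝 (g' τ)))
    (hC : ∀ δ : ℝ, 0 < δ → ∃ Cd : X → ℝ, Measurable Cd ∧ (∀ τ, 0 ≤ Cd τ) ∧
      (∀ τ, ∀ u ∈ Icc (0:ℝ) δ, g u τ ≤ Cd τ * u) ∧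
      Integrable (fun τ => Cd τ * ∫ s, K s τ) μ)
    (τ0 : X) (hτ0 : μ {τ0} = 1)
    (hmono : ∀ τ, τ ≠ τ0 → MonotoneOn (fun v => g v τ) (Ici 0))
    (hgτ0 : ∀ v, 0 < v → 0 < g v τ0)
    (S : ℝ) (hS : IsLUB ((fun v => g v τ0) '' Ici 0) S)
    (ζ2 : ℝ) (hζ2 : 0 < ζ2)
    (hΘmono : StrictMonoOn (fun v => v - ∫ τ in {τ0}ᶜ, (g v τ * ∫ s, K s τ) ∂μ) (Icc 0 ζ2))
    (hΘζ2 : (∫ s, K s τ0) * S < ζ2 - ∫ τ in {τ0}ᶜ, (g ζ2 τ * ∫ s, K s τ) ∂μ)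
    (G : ℝ → ℝ)
    (hGdef : ∀ v, 0 ≤ v → G v ∈ Icc 0 ζ2 ∧
      G v - (∫ τ in {τ0}ᶜ, (g (G v) τ * ∫ s, K s τ) ∂μ) = (∫ s, K s τ0) * g v τ0)
    (hχ0int : Integrable (fun p : ℝ × X => K p.1 p.2 * g' p.2) ((volume : Measure ℝ).prod μ))
    (hχ0 : 1 < ∫ τ, (∫ s, K s τ * g' τ) ∂μ)
    :
    ∃ ζ1 ∈ Ioo (0:ℝ) ζ2,
      (ContinuousOn G (Ici 0) ∧ (∀ s : ℝ, 0 < s → 0 < G s) ∧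
        ((∃ L : ℝ, 1 < L ∧ Tendsto (fun s => G s / s) (𝓝[>] 0) (𝓝 L)) ∨
          Tendsto (fun s => G s / s) (𝓝[>] 0) atTop)) ∧
      (MapsTo G (Icc ζ1 ζ2) (Icc ζ1 ζ2) ∧ MapsTo G (Ici 0) (Icc 0 ζ2)) ∧
      ((∀ s ∈ Icc ζ1 ζ2, G ζ1 ≤ G s) ∧ (∀ s ∈ Ioc (0:ℝ) ζ1, s < G s)) :=
  stmt4_general μ K g hKmeas hKpos hgmeas hg0 hgnn hgcont g' hg'meas hg'pos hg'lim hC τ0 hτ0 hgτ0 ζ2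
    hζ2 hΘmono G hGdef hχ0int hχ0
end

section
/- Assume condition (C) holds. Then every bounded solution φ of the convolution equation (17) is uniformly continuous on ℝ; more precisely, with δ := sup_{t∈ℝ} φ(t), for all t, h ∈ ℝ one has |φ(t+h) − φ(t)| ≤ δ · ∫_X C_δ(τ) (∫_ℝ |K(s+h,τ) − K(s,τ)| ds) dμ(τ), and this bound tends to 0 as h → 0. -/
open MeasureTheory Filter Topology Set

/-!
Substituting `s ↦ s + h` in the equation for `φ (t + h)` moves the shift from `φ` onto the
kernel: `φ (t + h) - φ t` is the integral of `(K (s + h) τ - K s τ) * g (φ (t - s)) τ`, and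
`0 ≤ g (φ u) τ ≤ C_δ τ * δ` by (C). The bound tends to `0` by continuity of translation in
`L¹(ℝ)` and dominated convergence in `τ`, with dominating function `2 C_δ τ ∫ K(s, τ) ds`.
-/

lemma tendsto_integral_abs_sub_comp_add_right {f : ℝ → ℝ} (hf : Integrable f) :
    Tendsto (fun h => ∫ s, |f (s + h) - f s|) (𝓝 0) (𝓝 0) := by
  let T : ℝ → C(ℝ, ℝ) := fun h => ⟨(· + h), by fun_prop⟩
  have hT : Continuous T :=
    ContinuousMap.continuous_of_continuous_uncurry _ (continuous_snd.add continuous_fst)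
  have hTm : ∀ h, MeasurePreserving (T h) := fun h => measurePreserving_add_right volume h
  let G : ℝ → Lp ℝ 1 (volume : Measure ℝ) := fun h =>
    Lp.compMeasurePreserving (T h) (hTm h) (hf.toL1 f)
  have hG : Continuous G := continuous_const.compMeasurePreservingLp hT hTm ENNReal.one_ne_top
  have hGf : ∀ h, G h =ᵐ[volume] fun s => f (s + h) := fun h =>
    (Lp.coeFn_compMeasurePreserving _ (hTm h)).trans
      ((hTm h).quasiMeasurePreserving.ae_eq_comp hf.coeFn_toL1)
  have hdist : ∀ h, dist (G h) (G 0) = ∫ s, |f (s + h) - f s| := fun h => by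
    rw [L1.dist_eq_integral_dist]
    refine integral_congr_ae ?_
    filter_upwards [hGf h, hGf 0] with s hh h0
    rw [hh, h0, Real.dist_eq, add_zero]
  simpa only [hdist, add_zero, sub_self, abs_zero, integral_zero] using (hG.tendsto 0).dist (tendsto_const_nhds (x := G 0))

lemma integral_abs_sub_comp_add_right_le {f : ℝ → ℝ} (hf : Integrable f) (h : ℝ) :
    ∫ s, |f (s + h) - f s| ≤ 2 * ∫ s, |f s| := by
  have hfh : Integrable fun s => |f (s + h)| := (hf.comp_add_right h).abs
  calc ∫ s, |f (s + h) - f s| ≤ ∫ s, (|f (s + h)| + |f s|) :=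
        integral_mono_of_nonneg (ae_of_all _ fun _ => abs_nonneg _) (hfh.add hf.abs)
          (ae_of_all _ fun s => abs_sub _ _)
    _ = 2 * ∫ s, |f s| := by
        rw [integral_add hfh hf.abs, integral_add_right_eq_self (fun s => |f s|) h]
        ring

lemma abs_integral_mul_le_of_abs_le {α : Type*} [MeasurableSpace α] {μ : Measure α}
    {k f : α → ℝ} {b : ℝ} (hk : Integrable k μ) (hf : ∀ x, |f x| ≤ b) :
    |∫ x, k x * f x ∂μ| ≤ b * ∫ x, |k x| ∂μ := by
  refine (norm_integral_le_of_norm_le (f := fun x => k x * f x) (hk.abs.const_mul b) (ae_of_all _ fun x => ?_)).trans_eq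
    (integral_const_mul b _)
  rw [Real.norm_eq_abs, abs_mul, mul_comm]
  exact mul_le_mul_of_nonneg_right (hf x) (abs_nonneg _)

lemma abs_integral_mul_comp_sub_add_sub_le {k f : ℝ → ℝ} {b : ℝ} (hk : Integrable k)
    (hfm : Measurable f) (hf : ∀ u, |f u| ≤ b) (t h : ℝ) :
    |(∫ s, k s * f (t + h - s)) - ∫ s, k s * f (t - s)| ≤ b * ∫ s, |k (s + h) - k s| := by
  have hshift : ∫ s, k s * f (t + h - s) = ∫ s, k (s + h) * f (t - s) := by
    rw [← integral_add_right_eq_self _ h]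
    simp only [add_sub_add_right_eq_sub]
  have hint : ∀ k' : ℝ → ℝ, Integrable k' → Integrable fun s => k' s * f (t - s) :=
    fun k' hk' => hk'.mul_bdd (hfm.comp (measurable_const.sub measurable_id)).aestronglyMeasurable
      (ae_of_all _ fun s => hf (t - s))
  rw [hshift, ← integral_sub (hint _ (hk.comp_add_right h)) (hint _ hk)]
  simpa only [Pi.sub_apply, sub_mul] using
    abs_integral_mul_le_of_abs_le ((hk.comp_add_right h).sub hk) fun s => hf (t - s)

section Kernel

variable {X : Type*} [MeasurableSpace X] {μ : Measure X} {K : ℝ → X → ℝ} {C : X → ℝ}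

lemma aestronglyMeasurable_mul_integral_abs_sub_comp_add_right
    (hKm : Measurable fun p : ℝ × X => K p.1 p.2) (hCm : Measurable C) (h : ℝ) :
    AEStronglyMeasurable (fun τ => C τ * ∫ s, |K (s + h) τ - K s τ|) μ := by
  have hKh : Measurable fun p : ℝ × X => |K (p.1 + h) p.2 - K p.1 p.2| :=
    ((hKm.comp ((measurable_fst.add_const h).prodMk measurable_snd)).sub hKm).abs
  exact hCm.aestronglyMeasurable.mul
    (hKh.stronglyMeasurable.integral_prod_left' (μ := volume)).aestronglyMeasurable

lemma ae_norm_mul_integral_abs_sub_comp_add_right_le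
    (hKτ : ∀ᵐ τ ∂μ, Integrable fun s => K s τ) (hC : ∀ τ, 0 ≤ C τ) (h : ℝ) :
    ∀ᵐ τ ∂μ, ‖C τ * ∫ s, |K (s + h) τ - K s τ|‖ ≤ 2 * (C τ * ∫ s, |K s τ|) := by
  filter_upwards [hKτ] with τ hKτ
  rw [Real.norm_eq_abs, abs_of_nonneg (mul_nonneg (hC τ) (integral_nonneg fun _ => abs_nonneg _)),
    mul_left_comm]
  exact mul_le_mul_of_nonneg_left (integral_abs_sub_comp_add_right_le hKτ h) (hC τ)

variable (hKm : Measurable fun p : ℝ × X => K p.1 p.2) (hKτ : ∀ᵐ τ ∂μ, Integrable fun s => K s τ)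
  (hCm : Measurable C) (hC : ∀ τ, 0 ≤ C τ) (hCK : Integrable (fun τ => C τ * ∫ s, |K s τ|) μ)
include hKm hKτ hCm hC hCK

lemma integrable_mul_integral_abs_sub_comp_add_right (h : ℝ) :
    Integrable (fun τ => C τ * ∫ s, |K (s + h) τ - K s τ|) μ :=
  (hCK.const_mul 2).mono' (aestronglyMeasurable_mul_integral_abs_sub_comp_add_right hKm hCm h)
    (ae_norm_mul_integral_abs_sub_comp_add_right_le hKτ hC h)

lemma tendsto_integral_mul_integral_abs_sub_comp_add_right :
    Tendsto (fun h => ∫ τ, (C τ * ∫ s, |K (s + h) τ - K s τ|) ∂μ) (𝓝 0) (𝓝 0) := by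
  have hlim : ∀ᵐ τ ∂μ,
      Tendsto (fun h => C τ * ∫ s, |K (s + h) τ - K s τ|) (𝓝 0) (𝓝 (C τ * 0)) := by
    filter_upwards [hKτ] with τ hKτ
    exact (tendsto_integral_abs_sub_comp_add_right hKτ).const_mul (C τ)
  simpa only [mul_zero, integral_zero] using tendsto_integral_filter_of_dominated_convergence _
    (.of_forall (aestronglyMeasurable_mul_integral_abs_sub_comp_add_right hKm hCm))
    (.of_forall (ae_norm_mul_integral_abs_sub_comp_add_right_le hKτ hC)) (hCK.const_mul 2) hlim

variable {F : ℝ → X → ℝ} {δ : ℝ} (hFm : Measurable fun p : ℝ × X => F p.1 p.2)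
  (hF : ∀ u τ, |F u τ| ≤ C τ * δ)
include hFm hF

omit hCm hC in
lemma integrable_integral_mul_comp_sub (t : ℝ) :
    Integrable (fun τ => ∫ s, K s τ * F (t - s) τ) μ := by
  have hKF : Measurable fun p : ℝ × X => K p.1 p.2 * F (t - p.1) p.2 :=
    hKm.mul (hFm.comp ((measurable_const.sub measurable_fst).prodMk measurable_snd))
  refine (hCK.mul_const δ).mono'
    (hKF.stronglyMeasurable.integral_prod_left' (μ := volume)).aestronglyMeasurable ?_
  filter_upwards [hKτ] with τ hKτ
  calc ‖∫ s, K s τ * F (t - s) τ‖ ≤ C τ * δ * ∫ s, |K s τ| :=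
        abs_integral_mul_le_of_abs_le hKτ fun s => hF (t - s) τ
    _ = C τ * (∫ s, |K s τ|) * δ := by ring

lemma abs_integral_integral_mul_comp_sub_add_sub_le (t h : ℝ) :
    |(∫ τ, (∫ s, K s τ * F (t + h - s) τ) ∂μ) - ∫ τ, (∫ s, K s τ * F (t - s) τ) ∂μ| ≤
      δ * ∫ τ, (C τ * ∫ s, |K (s + h) τ - K s τ|) ∂μ := by
  rw [← integral_sub (integrable_integral_mul_comp_sub hKm hKτ hCK hFm hF (t + h))
    (integrable_integral_mul_comp_sub hKm hKτ hCK hFm hF t), ← integral_const_mul]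
  refine norm_integral_le_of_norm_le (G := ℝ)
    ((integrable_mul_integral_abs_sub_comp_add_right hKm hKτ hCm hC hCK h).const_mul δ) ?_
  filter_upwards [hKτ] with τ hKτ
  calc _ ≤ C τ * δ * ∫ s, |K (s + h) τ - K s τ| :=
        abs_integral_mul_comp_sub_add_sub_le hKτ (hFm.comp measurable_prodMk_right)
          (fun u => hF u τ) t h
    _ = δ * (C τ * ∫ s, |K (s + h) τ - K s τ|) := by ring

end Kernel

lemma uniformContinuous_of_abs_sub_le {f ω : ℝ → ℝ} (hf : ∀ t h, |f (t + h) - f t| ≤ ω h)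
    (hω : Tendsto ω (𝓝 0) (𝓝 0)) : UniformContinuous f := by
  rw [Metric.uniformContinuous_iff]
  intro ε hε
  obtain ⟨η, hη, hball⟩ := Metric.eventually_nhds_iff.mp (hω.eventually (Iio_mem_nhds hε))
  refine ⟨η, hη, fun {x y} hxy => ?_⟩
  calc dist (f x) (f y) = |f (y + (x - y)) - f y| := by rw [add_sub_cancel, Real.dist_eq]
    _ ≤ ω (x - y) := hf y (x - y)
    _ < ε := hball (by simpa only [Real.dist_eq, sub_zero] using hxy)

theorem stmt7_general
    {X : Type*} [MeasurableSpace X] (μ : Measure X) [IsFiniteMeasure μ]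
    (K : ℝ → X → ℝ) (g : ℝ → X → ℝ)
    (hKmeas : Measurable fun p : ℝ × X => K p.1 p.2)
    (hKnn : ∀ s τ, 0 ≤ K s τ)
    (hKint : Integrable (fun p : ℝ × X => K p.1 p.2) ((volume : Measure ℝ).prod μ))
    (hgmeas : Measurable fun p : ℝ × X => g p.1 p.2)
    (hgnn : ∀ u τ, 0 ≤ u → 0 ≤ g u τ)
    (φ : ℝ → ℝ) (hφc : Continuous φ)
    (hφnn : ∀ t, 0 ≤ φ t)
    (hφbd : ∃ M, ∀ t, φ t ≤ M)
    (hφeq : ∀ t, φ t = ∫ τ, (∫ s, K s τ * g (φ (t - s)) τ) ∂μ)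
    (δ : ℝ) (hδ : δ = sSup (Set.range φ))
    (Cd : X → ℝ) (hCdm : Measurable Cd) (hCdnn : ∀ τ, 0 ≤ Cd τ)
    (hCdbd : ∀ τ, ∀ u ∈ Icc (0:ℝ) δ, g u τ ≤ Cd τ * u)
    (hCdint : Integrable (fun τ => Cd τ * ∫ s, K s τ) μ) :
    UniformContinuous φ ∧
    (∀ t h : ℝ, |φ (t + h) - φ t| ≤ δ * ∫ τ, (Cd τ * ∫ s, |K (s + h) τ - K s τ|) ∂μ) ∧
    Tendsto (fun h : ℝ => δ * ∫ τ, (Cd τ * ∫ s, |K (s + h) τ - K s τ|) ∂μ) (𝓝 0) (𝓝 0) := by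
  obtain ⟨M, hM⟩ := hφbd
  have hφδ : ∀ t, φ t ≤ δ := fun t => by
    rw [hδ]
    exact le_csSup ⟨M, forall_mem_range.2 hM⟩ (mem_range_self t)
  have hKτ : ∀ᵐ τ ∂μ, Integrable fun s => K s τ := hKint.prod_left_ae
  have hCK : Integrable (fun τ => Cd τ * ∫ s, |K s τ|) μ := by
    simpa only [abs_of_nonneg (hKnn _ _)] using hCdint
  have hgφ : ∀ u τ, |g (φ u) τ| ≤ Cd τ * δ := fun u τ => by
    rw [abs_of_nonneg (hgnn _ τ (hφnn u))]
    exact (hCdbd τ _ ⟨hφnn u, hφδ u⟩).trans (mul_le_mul_of_nonneg_left (hφδ u) (hCdnn τ))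
  have hgφm : Measurable fun p : ℝ × X => g (φ p.1) p.2 :=
    hgmeas.comp ((hφc.measurable.comp measurable_fst).prodMk measurable_snd)
  have hmod : ∀ t h : ℝ,
      |φ (t + h) - φ t| ≤ δ * ∫ τ, (Cd τ * ∫ s, |K (s + h) τ - K s τ|) ∂μ := fun t h => by
    rw [hφeq (t + h), hφeq t]
    exact abs_integral_integral_mul_comp_sub_add_sub_le (F := fun u τ => g (φ u) τ)
      hKmeas hKτ hCdm hCdnn hCK hgφm hgφ t h
  have hlim : Tendsto (fun h : ℝ => δ * ∫ τ, (Cd τ * ∫ s, |K (s + h) τ - K s τ|) ∂μ)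
      (𝓝 0) (𝓝 0) := by
    simpa only [mul_zero] using
      (tendsto_integral_mul_integral_abs_sub_comp_add_right hKmeas hKτ hCdm hCdnn hCK).const_mul δ
  exact ⟨uniformContinuous_of_abs_sub_le hmod hlim, hmod, hlim⟩

theorem stmt7
    {X : Type*} [MeasurableSpace X] (μ : Measure X) [IsFiniteMeasure μ]
    (K : ℝ → X → ℝ) (g : ℝ → X → ℝ)
    (hKmeas : Measurable fun p : ℝ × X => K p.1 p.2)
    (hKnn : ∀ s τ, 0 ≤ K s τ)
    (hKint : Integrable (fun p : ℝ × X => K p.1 p.2) ((volume : Measure ℝ).prod μ))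
    (hKpos : ∀ τ, 0 < ∫ s, K s τ)
    (hgmeas : Measurable fun p : ℝ × X => g p.1 p.2)
    (hg0 : ∀ τ, g 0 τ = 0)
    (hgnn : ∀ u τ, 0 ≤ u → 0 ≤ g u τ)
    (hgcont : ∀ τ, ContinuousOn (fun u => g u τ) (Ici 0))
    (φ : ℝ → ℝ) (hφc : Continuous φ)
    (hφnn : ∀ t, 0 ≤ φ t)
    (hφbd : ∃ M, ∀ t, φ t ≤ M)
    (hφeq : ∀ t, φ t = ∫ τ, (∫ s, K s τ * g (φ (t - s)) τ) ∂μ)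
    (δ : ℝ) (hδ : δ = sSup (Set.range φ))
    (Cd : X → ℝ) (hCdm : Measurable Cd) (hCdnn : ∀ τ, 0 ≤ Cd τ)
    (hCdbd : ∀ τ, ∀ u ∈ Icc (0:ℝ) δ, g u τ ≤ Cd τ * u)
    (hCdint : Integrable (fun τ => Cd τ * ∫ s, K s τ) μ) :
    UniformContinuous φ ∧
    (∀ t h : ℝ, |φ (t + h) - φ t| ≤ δ * ∫ τ, (Cd τ * ∫ s, |K (s + h) τ - K s τ|) ∂μ) ∧
    Tendsto (fun h : ℝ => δ * ∫ τ, (Cd τ * ∫ s, |K (s + h) τ - K s τ|) ∂μ) (𝓝 0) (𝓝 0) :=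
  stmt7_general μ K g hKmeas hKnn hKint hgmeas hgnn φ hφc hφnn hφbd hφeq δ hδ Cd hCdm hCdnn hCdbd
    hCdint
end

section
/- Let k : ℝ × X → [0,∞) be measurable and integrable on ℝ × X with 1 < ∫_X ∫_ℝ k(s,τ) ds dμ(τ) < ∞ (in the paper, k(s,τ) = K(s,τ) g'(0,τ)). Then the only bounded continuous function y : ℝ → [0,∞) satisfying the linear convolution equation y(t) = ∫_X (∫_ℝ k(s,τ) y(t−s) ds) dμ(τ) for all t ∈ ℝ is y ≡ 0. -/
open MeasureTheory Set
open scoped ENNReal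

/-!
Pushing the kernel forward to `ν A = ∫_X ∫_A k(s, τ) ds dμ(τ)` turns the equation into
`y = y ⋆ ν` with `ν ℝ > 1`. Choose `R` with `c := ν [-R, R] > 1`. Integrating the equation over
`[-T-R, T+R]` and keeping only the shifts `|s| ≤ R` gives
`c ∫_{[-T,T]} y ≤ ∫_{[-T-R,T+R]} y ≤ ∫_{[-T,T]} y + 2 R sup y`,
so the window integrals are bounded by `2 R sup y / (c - 1)` and `y` is integrable. Integrating the
equation over all of `ℝ` now gives `∫ y = ν ℝ * ∫ y` with finite `∫ y`, hence `∫ y = 0`, and the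
continuous nonnegative `y` vanishes.
-/

lemma ENNReal.le_div_tsub_one_of_mul_le_add {c x a : ℝ≥0∞} (hc : 1 < c) (hx : x ≠ ∞) (ha : a ≠ ∞)
    (h : c * x ≤ x + a) : x ≤ a / (c - 1) := by
  rw [ENNReal.le_div_iff_mul_le (Or.inl (tsub_pos_of_lt hc).ne') (Or.inr ha), mul_comm,
    ENNReal.sub_mul fun _ _ => hx, one_mul, tsub_le_iff_left]
  exact h

lemma Real.iUnion_Icc_neg_natCast : ⋃ n : ℕ, Icc (-(n : ℝ)) n = univ :=
  eq_univ_of_forall fun x =>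
    mem_iUnion.2 ⟨⌈|x|⌉₊, abs_le.1 (Nat.le_ceil _)⟩

lemma Real.monotone_Icc_neg_natCast : Monotone fun n : ℕ => Icc (-(n : ℝ)) n :=
  fun _ _ h => Icc_subset_Icc (neg_le_neg (Nat.cast_le.2 h)) (Nat.cast_le.2 h)

namespace MeasureTheory

lemma lintegral_eq_iSup_setLIntegral_Icc_neg_natCast (f : ℝ → ℝ≥0∞) (μ : Measure ℝ) :
    ∫⁻ x, f x ∂μ = ⨆ n : ℕ, ∫⁻ x in Icc (-(n : ℝ)) n, f x ∂μ := by
  rw [← setLIntegral_iUnion_of_directed f Real.monotone_Icc_neg_natCast.directed_le,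
    Real.iUnion_Icc_neg_natCast, Measure.restrict_univ]

lemma measure_univ_eq_iSup_Icc_neg_natCast (μ : Measure ℝ) :
    μ univ = ⨆ n : ℕ, μ (Icc (-(n : ℝ)) n) := by
  rw [← Real.iUnion_Icc_neg_natCast, Real.monotone_Icc_neg_natCast.measure_iUnion]

section Window

variable {Y : ℝ → ℝ≥0∞} {M : ℝ≥0∞}

lemma setLIntegral_le_mul_measure {α : Type*} [MeasurableSpace α] {μ : Measure α} {f : α → ℝ≥0∞}
    (hf : ∀ x, f x ≤ M) (s : Set α) : ∫⁻ x in s, f x ∂μ ≤ M * μ s :=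
  (lintegral_mono hf).trans_eq (setLIntegral_const s M)

lemma setLIntegral_Icc_widen_le (hY : ∀ t, Y t ≤ M) (T R : ℝ) :
    ∫⁻ t in Icc (-T - R) (T + R), Y t
      ≤ (∫⁻ t in Icc (-T) T, Y t) + 2 * (M * ENNReal.ofReal R) := by
  have hcover : Icc (-T - R) (T + R) ⊆ Icc (-T - R) (-T) ∪ Icc (-T) T ∪ Icc T (T + R) := by
    intro t ⟨h₁, h₂⟩
    by_cases hl : t ≤ -T
    · exact Or.inl (Or.inl ⟨h₁, hl⟩)
    by_cases hr : T ≤ t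
    · exact Or.inr ⟨hr, h₂⟩
    exact Or.inl (Or.inr ⟨by linarith, by linarith⟩)
  have hend : ∀ a, ∫⁻ t in Icc a (a + R), Y t ≤ M * ENNReal.ofReal R := fun a => by
    simpa using setLIntegral_le_mul_measure (μ := volume) hY (Icc a (a + R))
  calc ∫⁻ t in Icc (-T - R) (T + R), Y t
      ≤ ∫⁻ t in Icc (-T - R) (-T) ∪ Icc (-T) T ∪ Icc T (T + R), Y t := lintegral_mono_set hcover
    _ ≤ (∫⁻ t in Icc (-T - R) (-T), Y t) + (∫⁻ t in Icc (-T) T, Y t)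
          + ∫⁻ t in Icc T (T + R), Y t :=
        (lintegral_union_le _ _ _).trans (add_le_add_left (lintegral_union_le _ _ _) _)
    _ ≤ M * ENNReal.ofReal R + (∫⁻ t in Icc (-T) T, Y t) + M * ENNReal.ofReal R := by
        gcongr
        · simpa using hend (-T - R)
        · exact hend T
    _ = (∫⁻ t in Icc (-T) T, Y t) + 2 * (M * ENNReal.ofReal R) := by ring

lemma setLIntegral_Icc_le_setLIntegral_Icc_sub {T R s : ℝ} (hs : |s| ≤ R) :
    ∫⁻ t in Icc (-T) T, Y t ≤ ∫⁻ t in Icc (-T - R) (T + R), Y (t - s) := by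
  rw [← (measurePreserving_sub_right volume s).setLIntegral_comp_preimage_emb
    (measurableEmbedding_subRight s), preimage_sub_const_Icc]
  obtain ⟨h₁, h₂⟩ := abs_le.1 hs
  exact lintegral_mono_set (Icc_subset_Icc (by linarith) (by linarith))

variable {ν : Measure ℝ} [SFinite ν]

lemma measure_Icc_mul_setLIntegral_le (hYm : Measurable Y)
    (heq : ∀ t, Y t = ∫⁻ s, Y (t - s) ∂ν) (T R : ℝ) :
    ν (Icc (-R) R) * ∫⁻ t in Icc (-T) T, Y t ≤ ∫⁻ t in Icc (-T - R) (T + R), Y t := by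
  calc ν (Icc (-R) R) * ∫⁻ t in Icc (-T) T, Y t
      = ∫⁻ _ in Icc (-R) R, (∫⁻ t in Icc (-T) T, Y t) ∂ν := by rw [setLIntegral_const, mul_comm]
    _ ≤ ∫⁻ s in Icc (-R) R, (∫⁻ t in Icc (-T - R) (T + R), Y (t - s)) ∂ν :=
        setLIntegral_mono' measurableSet_Icc fun s hs =>
          setLIntegral_Icc_le_setLIntegral_Icc_sub (abs_le.2 hs)
    _ ≤ ∫⁻ s, (∫⁻ t in Icc (-T - R) (T + R), Y (t - s)) ∂ν := setLIntegral_le_lintegral _ _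
    _ = ∫⁻ t in Icc (-T - R) (T + R), Y t := by
        rw [lintegral_lintegral_swap (f := fun s t => Y (t - s))
          (hYm.comp (measurable_snd.sub measurable_fst)).aemeasurable]
        exact lintegral_congr fun t => (heq t).symm

end Window

section FixedPoint

variable {Y : ℝ → ℝ≥0∞} {M : ℝ≥0∞} {ν : Measure ℝ} [SFinite ν]

lemma lintegral_le_of_one_lt_measure_Icc (hYm : Measurable Y) (hY : ∀ t, Y t ≤ M)
    (hM : M ≠ ∞) (heq : ∀ t, Y t = ∫⁻ s, Y (t - s) ∂ν) {R : ℝ} (hR : 1 < ν (Icc (-R) R)) :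
    ∫⁻ t, Y t ≤ 2 * (M * ENNReal.ofReal R) / (ν (Icc (-R) R) - 1) := by
  rw [lintegral_eq_iSup_setLIntegral_Icc_neg_natCast]
  refine iSup_le fun n => ENNReal.le_div_tsub_one_of_mul_le_add hR ?_ (by finiteness)
    ((measure_Icc_mul_setLIntegral_le hYm heq _ R).trans (setLIntegral_Icc_widen_le hY _ R))
  exact ((setLIntegral_le_mul_measure hY _).trans_lt
    (ENNReal.mul_lt_top hM.lt_top measure_Icc_lt_top)).ne

lemma lintegral_eq_measure_univ_mul (hYm : Measurable Y)
    (heq : ∀ t, Y t = ∫⁻ s, Y (t - s) ∂ν) : ∫⁻ t, Y t = ν univ * ∫⁻ t, Y t := by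
  calc ∫⁻ t, Y t = ∫⁻ t, ∫⁻ s, Y (t - s) ∂ν := lintegral_congr heq
    _ = ∫⁻ s, (∫⁻ t, Y (t - s)) ∂ν := lintegral_lintegral_swap (f := fun t s => Y (t - s))
          (hYm.comp (measurable_fst.sub measurable_snd)).aemeasurable
    _ = ∫⁻ _, (∫⁻ t, Y t) ∂ν := by simp only [lintegral_sub_right_eq_self]
    _ = ν univ * ∫⁻ t, Y t := by rw [lintegral_const, mul_comm]

theorem lintegral_eq_zero_of_eq_lintegral_sub (hν : 1 < ν univ) (hYm : Measurable Y)
    (hY : ∀ t, Y t ≤ M) (hM : M ≠ ∞) (heq : ∀ t, Y t = ∫⁻ s, Y (t - s) ∂ν) :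
    ∫⁻ t, Y t = 0 := by
  obtain ⟨n, hn⟩ : ∃ n : ℕ, 1 < ν (Icc (-(n : ℝ)) n) := by
    rwa [measure_univ_eq_iSup_Icc_neg_natCast, lt_iSup_iff] at hν
  have hfin : ∫⁻ t, Y t ≠ ∞ := ((lintegral_le_of_one_lt_measure_Icc hYm hY hM heq hn).trans_lt
    (ENNReal.div_lt_top (by finiteness) (tsub_pos_of_lt hn).ne')).ne
  have hfix := lintegral_eq_measure_univ_mul hYm heq
  have hzero : (ν univ - 1) * ∫⁻ t, Y t = 0 := by
    rw [ENNReal.sub_mul fun _ _ => hfin, one_mul, ← hfix, tsub_self]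
  exact (mul_eq_zero.1 hzero).resolve_left (tsub_pos_of_lt hν).ne'

end FixedPoint

end MeasureTheory

section Kernel

variable {X : Type*} [MeasurableSpace X] {μ : Measure X} [SFinite μ] {k : ℝ → X → ℝ}

noncomputable def kernelMeasure (μ : Measure X) (k : ℝ → X → ℝ) : Measure ℝ :=
  (((volume : Measure ℝ).prod μ).withDensity fun p => ENNReal.ofReal (k p.1 p.2)).map Prod.fst

instance : SFinite (kernelMeasure μ k) := by
  unfold kernelMeasure; infer_instance

lemma ofReal_integral_kernel_mul_eq_lintegral_kernelMeasure (hknn : ∀ s τ, 0 ≤ k s τ)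
    (hkint : Integrable (fun p : ℝ × X => k p.1 p.2) ((volume : Measure ℝ).prod μ))
    {f : ℝ → ℝ} (hf : Measurable f) (hf0 : ∀ s, 0 ≤ f s) {M : ℝ} (hfM : ∀ s, f s ≤ M) :
    ENNReal.ofReal (∫ τ, (∫ s, k s τ * f s) ∂μ)
      = ∫⁻ s, ENNReal.ofReal (f s) ∂kernelMeasure μ k := by
  have hint : Integrable (fun p : ℝ × X => k p.1 p.2 * f p.1) ((volume : Measure ℝ).prod μ) :=
    hkint.mul_bdd (hf.comp measurable_fst).aestronglyMeasurable
      (ae_of_all _ fun p => by simpa [abs_of_nonneg (hf0 p.1)] using hfM p.1)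
  rw [kernelMeasure, lintegral_map hf.ennreal_ofReal measurable_fst,
    lintegral_withDensity_eq_lintegral_mul₀ hkint.aemeasurable.ennreal_ofReal
      (g := fun p => ENNReal.ofReal (f p.1)) (hf.comp measurable_fst).ennreal_ofReal.aemeasurable,
    ← integral_prod_symm _ hint,
    ofReal_integral_eq_lintegral_ofReal hint (ae_of_all _ fun p => mul_nonneg (hknn _ _) (hf0 _))]
  exact lintegral_congr fun p => ENNReal.ofReal_mul (hknn _ _)

end Kernel

theorem stmt8_general
    {X : Type*} [MeasurableSpace X] (μ : Measure X) [IsFiniteMeasure μ]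
    (k : ℝ → X → ℝ)
    (hknn : ∀ s τ, 0 ≤ k s τ)
    (hkint : Integrable (fun p : ℝ × X => k p.1 p.2) ((volume : Measure ℝ).prod μ))
    (hkgt : 1 < ∫ τ, (∫ s, k s τ) ∂μ)
    (y : ℝ → ℝ) (hyc : Continuous y) (hynn : ∀ t, 0 ≤ y t)
    (hybd : ∃ M, ∀ t, y t ≤ M)
    (hyeq : ∀ t, y t = ∫ τ, (∫ s, k s τ * y (t - s)) ∂μ)
    :
    ∀ t, y t = 0 := by
  obtain ⟨M, hM⟩ := hybd
  have hν : 1 < kernelMeasure μ k univ := by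
    have h := ofReal_integral_kernel_mul_eq_lintegral_kernelMeasure hknn hkint
      measurable_const (fun _ => zero_le_one) (fun _ => le_refl (1 : ℝ))
    simp only [mul_one, ENNReal.ofReal_one, lintegral_const, one_mul] at h
    exact h ▸ ENNReal.one_lt_ofReal.2 hkgt
  have heq (t : ℝ) :
      ENNReal.ofReal (y t) = ∫⁻ s, ENNReal.ofReal (y (t - s)) ∂kernelMeasure μ k :=
    (congrArg ENNReal.ofReal (hyeq t)).trans
      (ofReal_integral_kernel_mul_eq_lintegral_kernelMeasure hknn hkint
        (hyc.comp (continuous_const.sub continuous_id)).measurable (fun _ => hynn _) fun _ => hM _)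
  have hzero := lintegral_eq_zero_of_eq_lintegral_sub hν hyc.measurable.ennreal_ofReal
    (fun t => ENNReal.ofReal_le_ofReal (hM t)) ENNReal.ofReal_ne_top heq
  have hae : y =ᵐ[volume] 0 := by
    filter_upwards [(lintegral_eq_zero_iff hyc.measurable.ennreal_ofReal).1 hzero] with t ht
    exact le_antisymm (ENNReal.ofReal_eq_zero.1 ht) (hynn t)
  exact congrFun ((hyc.ae_eq_iff_eq volume continuous_const).1 hae)

theorem stmt8
    {X : Type*} [MeasurableSpace X] (μ : Measure X) [IsFiniteMeasure μ]
    (k : ℝ → X → ℝ)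
    (hkmeas : Measurable fun p : ℝ × X => k p.1 p.2)
    (hknn : ∀ s τ, 0 ≤ k s τ)
    (hkint : Integrable (fun p : ℝ × X => k p.1 p.2) ((volume : Measure ℝ).prod μ))
    (hkgt : 1 < ∫ τ, (∫ s, k s τ) ∂μ)
    (y : ℝ → ℝ) (hyc : Continuous y) (hynn : ∀ t, 0 ≤ y t)
    (hybd : ∃ M, ∀ t, y t ≤ M)
    (hyeq : ∀ t, y t = ∫ τ, (∫ s, k s τ * y (t - s)) ∂μ)
    :
    ∀ t, y t = 0 :=
  stmt8_general μ k hknn hkint hkgt y hyc hynn hybd hyeq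
end

section
/- Let p > q > 0, h ≥ 0, and let K : ℝ → [0,∞) be measurable with ∫_ℝ K(s) ds = 1. Define ψ(z,c) := z² − cz − q + p e^{−zch} ∫_ℝ K(s) e^{−zs} ds, and assume ∫_ℝ K(s) e^{−zs} ds is finite exactly for z in a maximal open interval (a,b) containing 0. Then there exist real numbers c⁻* < c⁺* such that: for every c ∈ (−∞, c⁻*] ∪ [c⁺*, +∞) the equation ψ(λ,c) = 0 has either exactly two real roots λ₁(c) ≤ λ₂(c) in (a,b) or exactly one real root λ₁(c) in (a,b); each such root is positive if c ≥ c⁺* and negative if c ≤ c⁻*; and if c ∈ (c⁻*, c⁺*) then ψ(z,c) > 0 for all z ∈ (a,b). -/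
/-!
For fixed `c`, `ψ(·, c)` is strictly convex on the interval where the Laplace transform of `K`
converges, and `ψ(0, c) = p - q > 0`. Hence it has at most two zeros, and any two points where
`ψ(·, c) ≤ 0` lie strictly on the same side of `0`. For `z > 0` the value `ψ(z, c)` decreases in
`c`, so the speeds `c` for which `ψ(·, c) ≤ 0` somewhere on `z ≥ 0` form an up-set; it is
nonempty, bounded below and closed, hence equal to `[c⁺, ∞)`. Closedness rests on Fatou's lemma:
`ψ ≤ 0` bounds the Laplace transform, so limits of such points stay in the open domain.
Reflecting the kernel, which turns `ψ(z, c)` into `ψ(-z, -c)`, gives `(-∞, c⁻]` on the negative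
side, the same-side property forces `c⁻ < c⁺`, and the intermediate value theorem between `0`
and a point where `ψ ≤ 0` produces the roots.
-/

open MeasureTheory Filter Topology Set

theorem ConvexOn.mul_pos_of_nonpos {s : Set ℝ} {f : ℝ → ℝ} (hf : ConvexOn ℝ s f)
    (h0 : 0 < f 0) {x y : ℝ} (hx : x ∈ s) (hy : y ∈ s) (hfx : f x ≤ 0) (hfy : f y ≤ 0) :
    0 < x * y := by
  by_contra! hxy
  have hmem : (0 : ℝ) ∈ segment ℝ x y := by
    rw [segment_eq_uIcc, mem_uIcc]
    rcases mul_nonpos_iff.1 hxy with ⟨hx0, hy0⟩ | ⟨hx0, hy0⟩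
    exacts [Or.inr ⟨hy0, hx0⟩, Or.inl ⟨hx0, hy0⟩]
  linarith [hf.le_on_segment hx hy hmem, max_le hfx hfy]

theorem StrictConvexOn.exists_eq_or_eq_of_eq_zero {s : Set ℝ} {f : ℝ → ℝ}
    (hf : StrictConvexOn ℝ s f) : ∃ z₁ z₂, ∀ z ∈ s, f z = 0 → z = z₁ ∨ z = z₂ := by
  have middle :
      ∀ {x y z}, x ∈ s → z ∈ s → x < y → y < z → f x = 0 → f z = 0 → f y ≠ 0 := by
    intro x y z hx hz hxy hyz hfx hfz
    have := hf.lt_on_openSegment hx hz (hxy.trans hyz).ne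
      (by rw [openSegment_eq_Ioo (hxy.trans hyz)]; exact ⟨hxy, hyz⟩)
    rw [hfx, hfz, max_self] at this
    exact this.ne
  by_cases h2 : ∃ x ∈ s, ∃ y ∈ s, x < y ∧ f x = 0 ∧ f y = 0
  · obtain ⟨x, hx, y, hy, hxy, hfx, hfy⟩ := h2
    refine ⟨x, y, fun z hz hfz => ?_⟩
    by_contra! hne
    rcases hne.1.lt_or_gt with hzx | hxz
    · exact middle hz hy hzx hxy hfz hfy hfx
    rcases hne.2.lt_or_gt with hzy | hyz
    · exact middle hx hy hxz hzy hfx hfy hfz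
    · exact middle hx hz hxy hyz hfx hfz hfy
  push Not at h2
  by_cases h1 : ∃ x ∈ s, f x = 0
  · obtain ⟨x, hx, hfx⟩ := h1
    refine ⟨x, x, fun z hz hfz => Or.inl ?_⟩
    by_contra hne
    rcases lt_or_gt_of_ne hne with h | h
    exacts [h2 z hz x hx h hfz hfx, h2 x hx z hz h hfx hfz]
  push Not at h1
  exact ⟨0, 0, fun z hz hfz => absurd hfz (h1 z hz)⟩

theorem convexOn_exp_neg_mul (w : ℝ) : ConvexOn ℝ univ fun z => Real.exp (-(z * w)) := by
  refine ⟨convex_univ, fun x _ y _ t u ht hu htu => ?_⟩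
  have h := convexOn_exp.2 (mem_univ (-(x * w))) (mem_univ (-(y * w))) ht hu htu
  simp only [smul_eq_mul] at h ⊢
  calc Real.exp (-((t * x + u * y) * w)) = Real.exp (t * -(x * w) + u * -(y * w)) := by ring_nf
    _ ≤ _ := h

theorem convexOn_integral {α E : Type*} [MeasurableSpace α] {μ : Measure α} [AddCommGroup E]
    [Module ℝ E] {s : Set E} {F : E → α → ℝ} (hs : Convex ℝ s)
    (hF : ∀ a, ConvexOn ℝ s (F · a)) (hint : ∀ z ∈ s, Integrable (F z) μ) :
    ConvexOn ℝ s fun z => ∫ a, F z a ∂μ := by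
  refine ⟨hs, fun x hx y hy t u ht hu htu => ?_⟩
  have hx' := (hint x hx).const_mul t
  have hy' := (hint y hy).const_mul u
  simp only [smul_eq_mul]
  rw [← integral_const_mul, ← integral_const_mul, ← integral_add hx' hy']
  exact integral_mono (hint _ (hs hx hy ht hu htu)) (hx'.add hy') fun a => by
    simpa only [smul_eq_mul] using (hF a).2 hx hy ht hu htu

theorem isClosed_image_snd_of_bounded_fst {S : Set (ℝ × ℝ)} (hS : IsClosed S)
    (hbdd : ∀ R, ∃ M, ∀ x ∈ S, |x.2| ≤ R → |x.1| ≤ M) : IsClosed (Prod.snd '' S) := by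
  refine isClosed_of_closure_subset fun c hc => ?_
  obtain ⟨M, hM⟩ := hbdd (|c| + 1)
  set T := S ∩ Prod.snd ⁻¹' Metric.closedBall c 1
  have hT : IsCompact T := by
    refine Metric.isCompact_of_isClosed_isBounded
      (hS.inter (Metric.isClosed_closedBall.preimage continuous_snd))
      (((Metric.isBounded_closedBall (x := (0 : ℝ)) (r := M)).prod
        (Metric.isBounded_closedBall (x := c) (r := 1))).subset ?_)
    rintro x ⟨hxS, hx⟩
    refine ⟨?_, hx⟩
    rw [mem_closedBall_zero_iff, Real.norm_eq_abs]
    rw [mem_preimage, Metric.mem_closedBall, Real.dist_eq] at hx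
    exact hM x hxS (by linarith [abs_sub_abs_le_abs_sub x.2 c])
  have hcT : c ∈ closure (Prod.snd '' T) := by
    refine closure_mono ?_ (Metric.isOpen_ball.inter_closure ⟨Metric.mem_ball_self one_pos, hc⟩)
    rintro _ ⟨hball, x, hxS, rfl⟩
    exact ⟨x, ⟨hxS, Metric.ball_subset_closedBall hball⟩, rfl⟩
  exact image_mono inter_subset_left ((hT.image continuous_snd).isClosed.closure_subset hcT)

namespace WaveSpeed

noncomputable def laplace (K : ℝ → ℝ) (z : ℝ) : ℝ := ∫ s, K s * Real.exp (-(z * s))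

def laplaceDomain (K : ℝ → ℝ) : Set ℝ := {z | Integrable fun s => K s * Real.exp (-(z * s))}

noncomputable def psi (p q h : ℝ) (K : ℝ → ℝ) (z c : ℝ) : ℝ :=
  z ^ 2 - c * z - q + p * Real.exp (-(z * c * h)) * laplace K z

variable {K : ℝ → ℝ}

theorem aestronglyMeasurable_mul_exp (hKm : AEStronglyMeasurable K) (z : ℝ) :
    AEStronglyMeasurable fun s => K s * Real.exp (-(z * s)) :=
  hKm.mul (by fun_prop : Continuous fun s => Real.exp (-(z * s))).aestronglyMeasurable

theorem laplace_nonneg (hK : ∀ s, 0 ≤ K s) (z : ℝ) : 0 ≤ laplace K z :=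
  integral_nonneg fun s => mul_nonneg (hK s) (Real.exp_nonneg _)

theorem laplace_zero : laplace K 0 = ∫ s, K s := by
  simp [laplace]

theorem zero_mem_laplaceDomain (hKi : Integrable K) : (0 : ℝ) ∈ laplaceDomain K := by
  simpa [laplaceDomain] using hKi

theorem convex_laplaceDomain (hKm : AEStronglyMeasurable K) : Convex ℝ (laplaceDomain K) := by
  intro x hx y hy t u ht hu htu
  refine Integrable.mono' ((hx.norm.const_mul t).add (hy.norm.const_mul u))
    (aestronglyMeasurable_mul_exp hKm _) (Eventually.of_forall fun s => ?_)
  have hexp := (convexOn_exp_neg_mul s).2 (mem_univ x) (mem_univ y) ht hu htu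
  simp only [smul_eq_mul, norm_mul, Real.norm_eq_abs, Real.abs_exp, Pi.add_apply] at hexp ⊢
  calc |K s| * Real.exp (-((t * x + u * y) * s))
      ≤ |K s| * (t * Real.exp (-(x * s)) + u * Real.exp (-(y * s))) := by gcongr
    _ = _ := by ring

theorem continuousAt_laplace (hKm : AEStronglyMeasurable K) {z : ℝ}
    (hz : laplaceDomain K ∈ 𝓝 z) : ContinuousAt (laplace K) z := by
  obtain ⟨u, v, ⟨hu, hv⟩, huv, hsub⟩ := exists_Icc_mem_subset_of_mem_nhds hz
  have hu' : u ∈ laplaceDomain K := hsub ⟨le_rfl, hu.trans hv⟩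
  have hv' : v ∈ laplaceDomain K := hsub ⟨hu.trans hv, le_rfl⟩
  refine continuousAt_of_dominated (Eventually.of_forall (aestronglyMeasurable_mul_exp hKm))
    ?_ (hu'.norm.add hv'.norm) (Eventually.of_forall fun s => by fun_prop)
  filter_upwards [huv] with w hw
  refine Eventually.of_forall fun s => ?_
  simp only [norm_mul, Real.norm_eq_abs, Real.abs_exp, Pi.add_apply]
  have : Real.exp (-(w * s)) ≤ Real.exp (-(u * s)) + Real.exp (-(v * s)) := by
    rcases le_total 0 s with hs | hs
    · have : Real.exp (-(w * s)) ≤ Real.exp (-(u * s)) := Real.exp_le_exp.2 (by nlinarith [hw.1])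
      linarith [Real.exp_pos (-(v * s))]
    · have : Real.exp (-(w * s)) ≤ Real.exp (-(v * s)) := Real.exp_le_exp.2 (by nlinarith [hw.2])
      linarith [Real.exp_pos (-(u * s))]
  rw [← mul_add]
  exact mul_le_mul_of_nonneg_left this (abs_nonneg _)

theorem mem_laplaceDomain_of_tendsto (hK : ∀ s, 0 ≤ K s) (hKm : AEStronglyMeasurable K)
    {zs : ℕ → ℝ} {z R : ℝ} (hzs : ∀ n, zs n ∈ laplaceDomain K) (hlim : Tendsto zs atTop (𝓝 z))
    (hR : ∀ᶠ n in atTop, laplace K (zs n) ≤ R) : z ∈ laplaceDomain K := by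
  have hnn : ∀ w s, 0 ≤ K s * Real.exp (-(w * s)) := fun w s =>
    mul_nonneg (hK s) (Real.exp_nonneg _)
  refine ⟨aestronglyMeasurable_mul_exp hKm z, ?_⟩
  rw [hasFiniteIntegral_iff_ofReal (Eventually.of_forall (hnn z))]
  have hpt : ∀ s, Tendsto (fun n => ENNReal.ofReal (K s * Real.exp (-(zs n * s)))) atTop
      (𝓝 (ENNReal.ofReal (K s * Real.exp (-(z * s))))) := fun s =>
    ((ENNReal.continuous_ofReal.comp
      (by fun_prop : Continuous fun w => K s * Real.exp (-(w * s)))).tendsto z).comp hlim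
  have hbound : ∀ n, laplace K (zs n) ≤ R →
      ∫⁻ s, ENNReal.ofReal (K s * Real.exp (-(zs n * s))) ≤ ENNReal.ofReal R := fun n hn => by
    rw [← ofReal_integral_eq_lintegral_ofReal (hzs n) (Eventually.of_forall (hnn (zs n)))]
    exact ENNReal.ofReal_le_ofReal hn
  calc ∫⁻ s, ENNReal.ofReal (K s * Real.exp (-(z * s)))
      = ∫⁻ s, liminf (fun n => ENNReal.ofReal (K s * Real.exp (-(zs n * s)))) atTop :=
        lintegral_congr fun s => (hpt s).liminf_eq.symm
    _ ≤ liminf (fun n => ∫⁻ s, ENNReal.ofReal (K s * Real.exp (-(zs n * s)))) atTop :=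
        lintegral_liminf_le' fun n =>
          (aestronglyMeasurable_mul_exp hKm (zs n)).aemeasurable.ennreal_ofReal
    _ ≤ ENNReal.ofReal R := liminf_le_of_frequently_le' (hR.mono hbound).frequently
    _ < ⊤ := ENNReal.ofReal_lt_top

theorem exp_mul_laplace (z r : ℝ) :
    Real.exp (-(z * r)) * laplace K z = ∫ s, K s * Real.exp (-(z * (s + r))) := by
  rw [laplace, ← integral_const_mul]
  congr 1 with s
  rw [mul_add, neg_add, Real.exp_add]
  ring

theorem convexOn_exp_mul_laplace (hK : ∀ s, 0 ≤ K s) (hKm : AEStronglyMeasurable K) (r : ℝ) :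
    ConvexOn ℝ (laplaceDomain K) fun z => Real.exp (-(z * r)) * laplace K z := by
  simp only [exp_mul_laplace]
  refine convexOn_integral (convex_laplaceDomain hKm) (fun s => ?_) fun z hz => ?_
  · exact ((convexOn_exp_neg_mul (s + r)).subset (subset_univ _)
      (convex_laplaceDomain hKm)).smul (hK s)
  · refine (hz.const_mul (Real.exp (-(z * r)))).congr (Eventually.of_forall fun s => ?_)
    simp only [mul_add, neg_add, Real.exp_add]
    ring

variable {p q h : ℝ}

theorem psi_zero (hK1 : ∫ s, K s = 1) (c : ℝ) : psi p q h K 0 c = p - q := by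
  simp only [psi, laplace_zero, hK1, zero_mul, mul_zero, neg_zero, Real.exp_zero]
  ring

theorem psi_antitone (hp : 0 ≤ p) (hh : 0 ≤ h) (hK : ∀ s, 0 ≤ K s) {z : ℝ}
    (hz : 0 ≤ z) : Antitone (psi p q h K z) := by
  intro c c' hcc
  have hexp : Real.exp (-(z * c' * h)) ≤ Real.exp (-(z * c * h)) :=
    Real.exp_le_exp.2 (by nlinarith [mul_nonneg hz hh])
  have := mul_le_mul_of_nonneg_right (mul_le_mul_of_nonneg_left hexp hp) (laplace_nonneg hK z)
  simp only [psi]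
  nlinarith

theorem psi_monotone (hp : 0 ≤ p) (hh : 0 ≤ h) (hK : ∀ s, 0 ≤ K s) {z : ℝ}
    (hz : z ≤ 0) : Monotone (psi p q h K z) := by
  intro c c' hcc
  have hexp : Real.exp (-(z * c * h)) ≤ Real.exp (-(z * c' * h)) :=
    Real.exp_le_exp.2 (by nlinarith [mul_nonpos_of_nonpos_of_nonneg hz hh])
  have := mul_le_mul_of_nonneg_right (mul_le_mul_of_nonneg_left hexp hp) (laplace_nonneg hK z)
  simp only [psi]
  nlinarith

theorem strictConvexOn_psi (hp : 0 ≤ p) (hK : ∀ s, 0 ≤ K s) (hKm : AEStronglyMeasurable K)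
    (c : ℝ) : StrictConvexOn ℝ (laplaceDomain K) (psi p q h K · c) := by
  have hD := convex_laplaceDomain hKm
  have hquad : StrictConvexOn ℝ (laplaceDomain K) fun z : ℝ => z ^ 2 :=
    (Even.strictConvexOn_pow even_two two_ne_zero).subset (subset_univ _) hD
  have hlin : ConvexOn ℝ (laplaceDomain K) fun z => -c * z - q :=
    ((LinearMap.mul ℝ ℝ (-c)).convexOn hD).add_const (-q)
  have e : (psi p q h K · c) = (fun z => z ^ 2) + ((fun z => -c * z - q) +
      fun z => p • (Real.exp (-(z * (c * h))) * laplace K z)) := by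
    funext z
    simp only [psi, Pi.add_apply, smul_eq_mul]
    ring_nf
  rw [e]
  exact hquad.add_convexOn (hlin.add ((convexOn_exp_mul_laplace hK hKm (c * h)).smul hp))

theorem mul_pos_of_psi_nonpos (hp : 0 ≤ p) (hpq : q < p) (hK : ∀ s, 0 ≤ K s)
    (hKm : AEStronglyMeasurable K) (hK1 : ∫ s, K s = 1) {c x y : ℝ} (hx : x ∈ laplaceDomain K)
    (hy : y ∈ laplaceDomain K) (hψx : psi p q h K x c ≤ 0) (hψy : psi p q h K y c ≤ 0) :
    0 < x * y :=
  (strictConvexOn_psi hp hK hKm c).convexOn.mul_pos_of_nonpos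
    (by rw [psi_zero hK1]; linarith) hx hy hψx hψy

theorem continuousAt_psi (hKm : AEStronglyMeasurable K) (hD : IsOpen (laplaceDomain K))
    {z : ℝ} (hz : z ∈ laplaceDomain K) (c : ℝ) :
    ContinuousAt (fun x : ℝ × ℝ => psi p q h K x.1 x.2) (z, c) := by
  have hL : ContinuousAt (fun x : ℝ × ℝ => laplace K x.1) (z, c) :=
    ContinuousAt.comp (f := Prod.fst) (continuousAt_laplace hKm (hD.mem_nhds hz))
      continuousAt_fst
  simp only [psi]
  fun_prop

theorem exists_psi_nonpos (hp : 0 ≤ p) (hq : 0 ≤ q) (hh : 0 ≤ h) (hK : ∀ s, 0 ≤ K s) {z : ℝ}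
    (hz : z ≠ 0) : ∃ c, psi p q h K z c ≤ 0 := by
  refine ⟨(z ^ 2 + p * laplace K z) / z, ?_⟩
  set c := (z ^ 2 + p * laplace K z) / z
  have hL := laplace_nonneg hK z
  have hcz : c * z = z ^ 2 + p * laplace K z := div_mul_cancel₀ _ hz
  have hexp : Real.exp (-(z * c * h)) ≤ 1 :=
    Real.exp_le_one_iff.2 (by nlinarith [mul_nonneg (mul_nonneg hp hL) hh, sq_nonneg z])
  have := mul_le_mul_of_nonneg_right (mul_le_mul_of_nonneg_left hexp hp) hL
  simp only [psi]
  nlinarith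

theorem laplace_le_of_psi_nonpos (hp : 0 < p) {z c : ℝ} (hψ : psi p q h K z c ≤ 0) :
    laplace K z ≤ (c * z + q - z ^ 2) * Real.exp (z * c * h) / p := by
  have hψ' : p * Real.exp (-(z * c * h)) * laplace K z ≤ c * z + q - z ^ 2 := by
    rw [psi] at hψ
    linarith
  rw [le_div_iff₀ hp]
  calc laplace K z * p
      = p * Real.exp (-(z * c * h)) * laplace K z * Real.exp (z * c * h) := by
        rw [mul_right_comm, mul_assoc p, ← Real.exp_add, neg_add_cancel, Real.exp_zero]; ring
    _ ≤ (c * z + q - z ^ 2) * Real.exp (z * c * h) := by gcongr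

theorem abs_le_of_psi_nonpos (hp : 0 ≤ p) (hq : 0 ≤ q) (hK : ∀ s, 0 ≤ K s) {z c : ℝ}
    (hψ : psi p q h K z c ≤ 0) : |z| ≤ |c| + q + 1 := by
  have hquad : z ^ 2 ≤ |c| * |z| + q := by
    have := mul_nonneg (mul_nonneg hp (Real.exp_nonneg (-(z * c * h)))) (laplace_nonneg hK z)
    rw [psi] at hψ
    linarith [abs_mul c z ▸ le_abs_self (c * z)]
  by_contra! hlt
  nlinarith [abs_nonneg c, sq_abs z]

theorem isClosed_psi_nonpos (hp : 0 < p) (hK : ∀ s, 0 ≤ K s) (hKm : AEStronglyMeasurable K)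
    (hD : IsOpen (laplaceDomain K)) :
    IsClosed {x : ℝ × ℝ | x.1 ∈ laplaceDomain K ∧ psi p q h K x.1 x.2 ≤ 0} := by
  refine isSeqClosed_iff_isClosed.1 fun xs x hxs hlim => ?_
  set g : ℝ × ℝ → ℝ := fun x => (x.2 * x.1 + q - x.1 ^ 2) * Real.exp (x.1 * x.2 * h) / p
  have hg : Tendsto (g ∘ xs) atTop (𝓝 (g x)) :=
    ((by fun_prop : Continuous g).tendsto x).comp hlim
  have hx : x.1 ∈ laplaceDomain K :=
    mem_laplaceDomain_of_tendsto hK hKm (fun n => (hxs n).1)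
      ((continuous_fst.tendsto x).comp hlim)
      ((hg.eventually (gt_mem_nhds (lt_add_one (g x)))).mono fun n hn =>
        (laplace_le_of_psi_nonpos hp (hxs n).2).trans hn.le)
  exact ⟨hx, le_of_tendsto ((continuousAt_psi hKm hD hx x.2).tendsto.comp hlim)
    (Eventually.of_forall fun n => (hxs n).2)⟩

theorem exists_psi_eq_zero (hpq : q < p) (hKi : Integrable K) (hK1 : ∫ s, K s = 1)
    (hD : IsOpen (laplaceDomain K)) {z c : ℝ} (hz : z ∈ laplaceDomain K)
    (hψ : psi p q h K z c ≤ 0) :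
    ∃ w ∈ laplaceDomain K, psi p q h K w c = 0 := by
  have hcont : ContinuousOn (psi p q h K · c) (laplaceDomain K) := fun w hw =>
    (ContinuousAt.comp (g := fun x : ℝ × ℝ => psi p q h K x.1 x.2) (f := fun w => (w, c))
      (continuousAt_psi hKi.1 hD hw c) (by fun_prop)).continuousWithinAt
  exact (convex_laplaceDomain hKi.1).isPreconnected.intermediate_value hz
    (zero_mem_laplaceDomain hKi) hcont ⟨hψ, by rw [psi_zero hK1]; linarith⟩

-- Since `ψ(0, c) > 0`, the witness `z` is in fact positive.
def admissibleSpeeds (p q h : ℝ) (K : ℝ → ℝ) : Set ℝ :=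
  {c | ∃ z ∈ laplaceDomain K, 0 ≤ z ∧ psi p q h K z c ≤ 0}

theorem isClosed_admissibleSpeeds (hp : 0 < p) (hq : 0 ≤ q) (hK : ∀ s, 0 ≤ K s)
    (hKm : AEStronglyMeasurable K) (hD : IsOpen (laplaceDomain K)) :
    IsClosed (admissibleSpeeds p q h K) := by
  have e : admissibleSpeeds p q h K = Prod.snd '' ({x : ℝ × ℝ | 0 ≤ x.1} ∩
      {x | x.1 ∈ laplaceDomain K ∧ psi p q h K x.1 x.2 ≤ 0}) := by
    ext c
    constructor
    · rintro ⟨z, hz, hz0, hψ⟩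
      exact ⟨(z, c), ⟨hz0, hz, hψ⟩, rfl⟩
    · rintro ⟨⟨z, c⟩, ⟨hz0, hz, hψ⟩, rfl⟩
      exact ⟨z, hz, hz0, hψ⟩
  rw [e]
  refine isClosed_image_snd_of_bounded_fst ((isClosed_le continuous_const continuous_fst).inter
    (isClosed_psi_nonpos hp hK hKm hD)) fun R => ⟨R + q + 1, fun x hx hR => ?_⟩
  linarith [abs_le_of_psi_nonpos hp.le hq hK hx.2.2]

theorem mem_admissibleSpeeds_of_le (hp : 0 ≤ p) (hh : 0 ≤ h) (hK : ∀ s, 0 ≤ K s)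
    {c c' : ℝ} (hc : c ∈ admissibleSpeeds p q h K) (hcc : c ≤ c') :
    c' ∈ admissibleSpeeds p q h K := by
  obtain ⟨z, hz, hz0, hψ⟩ := hc
  exact ⟨z, hz, hz0, (psi_antitone hp hh hK hz0 hcc).trans hψ⟩

theorem exists_admissibleSpeeds_eq_Ici (hq : 0 ≤ q) (hpq : q < p) (hh : 0 ≤ h)
    (hK : ∀ s, 0 ≤ K s) (hK1 : ∫ s, K s = 1) (hD : IsOpen (laplaceDomain K)) :
    ∃ c₀, admissibleSpeeds p q h K = Ici c₀ := by
  have hp : 0 < p := hq.trans_lt hpq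
  have hKi : Integrable K := .of_integral_ne_zero (by rw [hK1]; exact one_ne_zero)
  obtain ⟨l, u, ⟨hl, hu⟩, hsub⟩ :=
    mem_nhds_iff_exists_Ioo_subset.1 (hD.mem_nhds (zero_mem_laplaceDomain hKi))
  have hl' : l / 2 ∈ laplaceDomain K := hsub ⟨by linarith, by linarith⟩
  have hu' : u / 2 ∈ laplaceDomain K := hsub ⟨by linarith, by linarith⟩
  obtain ⟨cl, hcl⟩ := exists_psi_nonpos hp.le hq hh hK (z := l / 2) (by linarith)
  obtain ⟨cu, hcu⟩ := exists_psi_nonpos hp.le hq hh hK (z := u / 2) (by linarith)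
  have hne : (admissibleSpeeds p q h K).Nonempty := ⟨cu, u / 2, hu', by linarith, hcu⟩
  have hbdd : BddBelow (admissibleSpeeds p q h K) := by
    refine ⟨cl, fun c ⟨z, hz, hz0, hψ⟩ => ?_⟩
    by_contra! hlt
    have := mul_pos_of_psi_nonpos hp.le hpq hK hKi.1 hK1 hl' hz
      ((psi_monotone hp.le hh hK (by linarith) hlt.le).trans hcl) hψ
    nlinarith
  exact ⟨sInf (admissibleSpeeds p q h K), Set.ext fun c => ⟨fun hc => csInf_le hbdd hc,
    mem_admissibleSpeeds_of_le hp.le hh hK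
      ((isClosed_admissibleSpeeds hp hq hK hKi.1 hD).csInf_mem hne hbdd)⟩⟩

theorem laplace_comp_neg (z : ℝ) : laplace (fun s => K (-s)) z = laplace K (-z) := by
  simp only [laplace]
  conv_rhs => rw [← integral_neg_eq_self]
  simp

theorem laplaceDomain_comp_neg : laplaceDomain (fun s => K (-s)) = -laplaceDomain K := by
  ext z
  simp only [Set.mem_neg, laplaceDomain, mem_ofPred_eq]
  constructor <;> intro hz <;> simpa using hz.comp_neg

theorem psi_comp_neg (z c : ℝ) :
    psi p q h (fun s => K (-s)) z c = psi p q h K (-z) (-c) := by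
  simp only [psi, laplace_comp_neg]
  ring_nf

theorem exists_nonpos_speeds_eq_Iic (hq : 0 ≤ q) (hpq : q < p) (hh : 0 ≤ h)
    (hK : ∀ s, 0 ≤ K s) (hK1 : ∫ s, K s = 1) (hD : IsOpen (laplaceDomain K)) :
    ∃ c₀, {c | ∃ z ∈ laplaceDomain K, z ≤ 0 ∧ psi p q h K z c ≤ 0} = Iic c₀ := by
  obtain ⟨c₀, hc₀⟩ := exists_admissibleSpeeds_eq_Ici (K := fun s => K (-s)) hq hpq hh
    (fun s => hK (-s)) (by rwa [integral_neg_eq_self])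
    (by rw [laplaceDomain_comp_neg]; exact hD.neg)
  refine ⟨-c₀, Set.ext fun c => ?_⟩
  rw [mem_Iic, le_neg, ← mem_Ici, ← hc₀]
  constructor
  · rintro ⟨z, hz, hz0, hψ⟩
    exact ⟨-z, by rwa [laplaceDomain_comp_neg, Set.mem_neg, neg_neg], by linarith,
      by rwa [psi_comp_neg, neg_neg, neg_neg]⟩
  · rintro ⟨z, hz, hz0, hψ⟩
    rw [laplaceDomain_comp_neg, Set.mem_neg] at hz
    rw [psi_comp_neg] at hψ
    exact ⟨-z, hz, by linarith, by rwa [neg_neg] at hψ⟩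

end WaveSpeed

open WaveSpeed in
theorem stmt17_general
    (p q h : ℝ) (hq : 0 < q) (hpq : q < p) (hh : 0 ≤ h)
    (K : ℝ → ℝ) (hKnn : ∀ s, 0 ≤ K s)
    (hKnorm : (∫ s, K s) = 1)
    (a b : EReal)
    (hdom : ∀ z : ℝ, (Integrable (fun s => K s * Real.exp (-(z * s)))) ↔ (a < (z:EReal) ∧ (z:EReal) < b)) :
    ∃ cm cp : ℝ, cm < cp ∧
      (∀ c : ℝ, (c ≤ cm ∨ cp ≤ c) →
        (∃ z : ℝ, (Integrable (fun s => K s * Real.exp (-(z * s)))) ∧ (fun z c : ℝ => z ^ 2 - c * z - q + p * Real.exp (-(z * c * h)) * ∫ s, K s * Real.exp (-(z * s))) z c = 0) ∧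
        (∃ z₁ z₂ : ℝ, ∀ z : ℝ, (Integrable (fun s => K s * Real.exp (-(z * s)))) → (fun z c : ℝ => z ^ 2 - c * z - q + p * Real.exp (-(z * c * h)) * ∫ s, K s * Real.exp (-(z * s))) z c = 0 → z = z₁ ∨ z = z₂) ∧
        (∀ z : ℝ, (Integrable (fun s => K s * Real.exp (-(z * s)))) → (fun z c : ℝ => z ^ 2 - c * z - q + p * Real.exp (-(z * c * h)) * ∫ s, K s * Real.exp (-(z * s))) z c = 0 →
          (cp ≤ c → 0 < z) ∧ (c ≤ cm → z < 0))) ∧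
      (∀ c : ℝ, cm < c → c < cp → ∀ z : ℝ, (Integrable (fun s => K s * Real.exp (-(z * s)))) → 0 < (fun z c : ℝ => z ^ 2 - c * z - q + p * Real.exp (-(z * c * h)) * ∫ s, K s * Real.exp (-(z * s))) z c) := by
  have hD : IsOpen (laplaceDomain K) := by
    rw [show laplaceDomain K = Real.toEReal ⁻¹' Ioo a b from Set.ext hdom]
    exact isOpen_Ioo.preimage continuous_coe_real_ereal
  have hKi : Integrable K := .of_integral_ne_zero (by rw [hKnorm]; exact one_ne_zero)
  have hp : 0 < p := hq.trans hpq
  have same_side {c x y : ℝ} := mul_pos_of_psi_nonpos (c := c) (x := x) (y := y) (h := h)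
    hp.le hpq hKnn hKi.1 hKnorm
  obtain ⟨cp, hcp⟩ := exists_admissibleSpeeds_eq_Ici hq.le hpq hh hKnn hKnorm hD
  obtain ⟨cm, hcm⟩ := exists_nonpos_speeds_eq_Iic hq.le hpq hh hKnn hKnorm hD
  have hpos {c : ℝ} (hc : cp ≤ c) : c ∈ admissibleSpeeds p q h K := hcp ▸ hc
  have hneg {c : ℝ} (hc : c ≤ cm) :
      c ∈ {c | ∃ z ∈ laplaceDomain K, z ≤ 0 ∧ psi p q h K z c ≤ 0} := hcm ▸ hc
  refine ⟨cm, cp, ?_, fun c hc => ⟨?_,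
    (strictConvexOn_psi hp.le hKnn hKi.1 c).exists_eq_or_eq_of_eq_zero,
    fun z hz hroot => ⟨?_, ?_⟩⟩, ?_⟩
  · by_contra! hle
    obtain ⟨z₁, hz₁, hz₁0, hψ₁⟩ := hneg hle
    obtain ⟨z₂, hz₂, hz₂0, hψ₂⟩ := hpos le_rfl
    nlinarith [same_side hz₁ hz₂ hψ₁ hψ₂]
  · rcases hc.imp hneg hpos with ⟨z, hz, -, hψ⟩ | ⟨z, hz, -, hψ⟩ <;>
      exact exists_psi_eq_zero hpq hKi hKnorm hD hz hψ
  · intro hc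
    obtain ⟨w, hw, hw0, hψ⟩ := hpos hc
    nlinarith [same_side hz hw hroot.le hψ]
  · intro hc
    obtain ⟨w, hw, hw0, hψ⟩ := hneg hc
    nlinarith [same_side hz hw hroot.le hψ]
  · intro c hcm' hcp' z hz
    by_contra! hle
    rcases le_total 0 z with hz0 | hz0
    · exact hcp'.not_ge (mem_Ici.1 (hcp ▸ ⟨z, hz, hz0, hle⟩))
    · exact hcm'.not_ge (mem_Iic.1 (hcm ▸ ⟨z, hz, hz0, hle⟩))

theorem stmt17
    (p q h : ℝ) (hq : 0 < q) (hpq : q < p) (hh : 0 ≤ h)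
    (K : ℝ → ℝ) (hKm : Measurable K) (hKnn : ∀ s, 0 ≤ K s)
    (hKint : Integrable K) (hKnorm : (∫ s, K s) = 1)
    (a b : EReal) (ha : a < 0) (hb : 0 < b)
    (hdom : ∀ z : ℝ, (Integrable (fun s => K s * Real.exp (-(z * s)))) ↔ (a < (z:EReal) ∧ (z:EReal) < b)) :
    ∃ cm cp : ℝ, cm < cp ∧
      (∀ c : ℝ, (c ≤ cm ∨ cp ≤ c) →
        (∃ z : ℝ, (Integrable (fun s => K s * Real.exp (-(z * s)))) ∧ (fun z c : ℝ => z ^ 2 - c * z - q + p * Real.exp (-(z * c * h)) * ∫ s, K s * Real.exp (-(z * s))) z c = 0) ∧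
        (∃ z₁ z₂ : ℝ, ∀ z : ℝ, (Integrable (fun s => K s * Real.exp (-(z * s)))) → (fun z c : ℝ => z ^ 2 - c * z - q + p * Real.exp (-(z * c * h)) * ∫ s, K s * Real.exp (-(z * s))) z c = 0 → z = z₁ ∨ z = z₂) ∧
        (∀ z : ℝ, (Integrable (fun s => K s * Real.exp (-(z * s)))) → (fun z c : ℝ => z ^ 2 - c * z - q + p * Real.exp (-(z * c * h)) * ∫ s, K s * Real.exp (-(z * s))) z c = 0 →
          (cp ≤ c → 0 < z) ∧ (c ≤ cm → z < 0))) ∧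
      (∀ c : ℝ, cm < c → c < cp → ∀ z : ℝ, (Integrable (fun s => K s * Real.exp (-(z * s)))) → 0 < (fun z c : ℝ => z ^ 2 - c * z - q + p * Real.exp (-(z * c * h)) * ∫ s, K s * Real.exp (-(z * s))) z c) :=
  stmt17_general p q h hq hpq hh K hKnn hKnorm a b hdom
end
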